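/- arXiv:0812.2978 — 6 statements merged into one kernel-verified Lean document; each statement's English description precedes it below -/
import Mathlib

section
/- The number of lattice paths from (0,0) to (2n,0) using steps (1,1) and (1,-1) that have exactly m up-steps whose ending point has y-coordinate at most 0 is the n-th Catalan number C_n = (1/(n+1))·binomial(2n,n), independent of m, for every 0 ≤ m ≤ n. -/
namespace CF

def val (b : Bool) : ℤ := if b then 1 else -1

def wsum (w : List Bool) : ℤ := (w.map val).sum

@[simp] lemma val_true : val true = 1 := rfl
@[simp] lemma val_false : val false = -1 := rfl

@[simp] lemma wsum_nil : wsum [] = 0 := rfl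
@[simp] lemma wsum_cons (b : Bool) (w : List Bool) : wsum (b :: w) = val b + wsum w := by
  simp [wsum]
@[simp] lemma wsum_append (u v : List Bool) : wsum (u ++ v) = wsum u + wsum v := by
  simp [wsum]

def np : ℤ → List Bool → ℕ
  | _, [] => 0
  | h, b :: t => (if b = true ∧ h + val b ≤ 0 then 1 else 0) + np (h + val b) t

@[simp] lemma np_nil (h : ℤ) : np h [] = 0 := rfl
lemma np_cons (h : ℤ) (b : Bool) (t : List Bool) :
    np h (b :: t) = (if b = true ∧ h + val b ≤ 0 then 1 else 0) + np (h + val b) t := rfl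

lemma np_append (h : ℤ) (u v : List Bool) :
    np h (u ++ v) = np h u + np (h + wsum u) v := by
  induction u generalizing h with
  | nil => simp
  | cons b t ih => simp [np_cons, ih, add_assoc]

def nneg (w : List Bool) : Prop := ∀ t, 0 ≤ wsum (w.take t)
def npos (w : List Bool) : Prop := ∀ t, wsum (w.take t) ≤ 0

lemma np_eq_zero (h : ℤ) (w : List Bool) (H : ∀ t, 0 ≤ h + wsum (w.take t)) : np h w = 0 := by
  induction w generalizing h with
  | nil => rfl
  | cons b t ih =>
    have h1 := H 0
    simp only [List.take_zero, wsum_nil, add_zero] at h1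
    rw [np_cons]
    have hb : ¬ (b = true ∧ h + val b ≤ 0) := by
      rintro ⟨rfl, hle⟩
      rw [val_true] at hle
      omega
    rw [if_neg hb, ih (h + val b) ?_]
    intro s
    have := H (s + 1)
    simp only [List.take_succ_cons, wsum_cons] at this
    omega

lemma np_eq_count (h : ℤ) (w : List Bool) (H : ∀ t, h + wsum (w.take t) ≤ 0) :
    np h w = w.count true := by
  induction w generalizing h with
  | nil => rfl
  | cons b t ih =>
    have h1 := H 1
    simp only [List.take_succ_cons, List.take_zero, wsum_cons, wsum_nil] at h1
    have ih' := ih (h + val b) (by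
      intro s
      have := H (s + 1)
      simp only [List.take_succ_cons, wsum_cons] at this
      omega)
    rw [np_cons, ih']
    cases b with
    | true =>
      rw [if_pos ⟨rfl, by omega⟩]
      simp [List.count_cons]
      omega
    | false =>
      rw [if_neg (by simp)]
      simp [List.count_cons]

lemma one_le_np (w : List Bool) : ∀ h : ℤ, h < 0 → 0 ≤ h + wsum w → 1 ≤ np h w := by
  induction w with
  | nil => intro h h1 h2; simp at h2; omega
  | cons b t ih =>
    intro h h1 h2
    rw [np_cons]
    cases b with
    | true =>
      rw [if_pos ⟨rfl, by rw [val_true]; omega⟩]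
      omega
    | false =>
      have h2' : 0 ≤ (h + val false) + wsum t := by
        simp only [wsum_cons] at h2; omega
      have := ih (h + val false) (by rw [val_false]; omega) h2'
      omega

lemma nneg_of_np_zero (w : List Bool) (hs : 0 ≤ wsum w) (h0 : np 0 w = 0) : nneg w := by
  intro t
  by_contra hc
  push_neg at hc
  have hd : np 0 w = np 0 (w.take t) + np (0 + wsum (w.take t)) (w.drop t) := by
    conv_lhs => rw [← List.take_append_drop t w]
    rw [np_append]
  have h2 : 0 ≤ wsum (w.take t) + wsum (w.drop t) := by
    rw [← wsum_append, List.take_append_drop]; exact hs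
  have h3 := one_le_np (w.drop t) (wsum (w.take t)) hc (by omega)
  rw [zero_add] at hd
  omega

lemma wsum_eq_count (w : List Bool) : wsum w = 2 * (w.count true : ℤ) - w.length := by
  induction w with
  | nil => simp
  | cons b t ih =>
    cases b <;> simp [wsum_cons, ih, List.count_cons] <;> ring

lemma two_mul_count_true (w : List Bool) (hs : wsum w = 0) : 2 * w.count true = w.length := by
  have h1 := wsum_eq_count w
  rw [hs] at h1
  have h2 : w.count true ≤ w.length := List.count_le_length
  omega

lemma wsum_take_succ (w : List Bool) (j : ℕ) (hj : j < w.length) :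
    wsum (w.take (j + 1)) = wsum (w.take j) + val w[j] := by
  rw [List.take_succ, wsum_append]
  simp [List.getElem?_eq_getElem hj, wsum]


lemma np_A (p q : List Bool) (hp : nneg p) (h0 : wsum p = 0) :
    np 0 (true :: p ++ false :: q) = np 0 q := by
  have h1 : np 1 p = 0 := np_eq_zero 1 p (fun t => by have := hp t; omega)
  rw [List.cons_append, np_cons, np_append, val_true]
  simp only [zero_add, h0, add_zero]
  rw [if_neg (by omega), h1, np_cons, val_false]
  rw [if_neg (by simp)]
  norm_num

lemma np_B (p q : List Bool) (hp : npos p) (h0 : wsum p = 0) :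
    np 0 (false :: p ++ true :: q) = (p.count true + 1) + np 0 q := by
  have h1 : np (-1) p = p.count true := np_eq_count (-1) p (fun t => by have := hp t; omega)
  rw [List.cons_append, np_cons, np_append, val_false]
  simp only [zero_add, h0, add_zero]
  rw [if_neg (by simp), h1, np_cons, val_true]
  rw [if_pos ⟨rfl, by omega⟩]
  norm_num
  omega

def Dy (k : ℕ) := {p : List Bool // p.length = 2 * k ∧ wsum p = 0 ∧ nneg p}
def An (k : ℕ) := {p : List Bool // p.length = 2 * k ∧ wsum p = 0 ∧ npos p}
def Sub (n m : ℕ) := {w : List Bool // w.length = 2 * n ∧ wsum w = 0 ∧ np 0 w = m}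
def SubB (n j m : ℕ) := {q : List Bool // q.length = 2 * n ∧ wsum q = 0 ∧ j + np 0 q = m}

lemma finite_aux (L : ℕ) (Q : List Bool → Prop) :
    Finite {w : List Bool // w.length = L ∧ Q w} := by
  have hs : {w : List Bool | w.length = L ∧ Q w} ⊆ {w : List Bool | w.length = L} :=
    fun w hw => hw.1
  exact ((List.finite_length_eq Bool L).subset hs).to_subtype

instance (k : ℕ) : Finite (Dy k) := finite_aux _ _
instance (k : ℕ) : Finite (An k) := finite_aux _ _
instance (n m : ℕ) : Finite (Sub n m) := finite_aux _ _
instance (n j m : ℕ) : Finite (SubB n j m) := finite_aux _ _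

lemma card_sigma_fin {N : ℕ} (f : Fin N → Type*) [∀ i, Finite (f i)] :
    Nat.card (Σ i, f i) = ∑ i, Nat.card (f i) := by
  letI : ∀ i, Fintype (f i) := fun i => Fintype.ofFinite _
  simp [Nat.card_eq_fintype_card, Fintype.card_sigma]

def T (n m : ℕ) :=
  Σ k : Fin (n + 1), (Dy k × Sub (n - k) m) ⊕ (An k × SubB (n - k) (k + 1) m)

instance (n m : ℕ) : Finite (T n m) := by
  unfold T; infer_instance

def f (n m : ℕ) : T n m → Sub (n + 1) m := fun x =>
  match x with
  | ⟨k, Sum.inl (p, q)⟩ => ⟨true :: p.1 ++ false :: q.1, by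
      obtain ⟨hp1, hp2, hp3⟩ := p.2
      obtain ⟨hq1, hq2, hq3⟩ := q.2
      have hk := k.isLt
      refine ⟨?_, ?_, ?_⟩
      · simp only [List.cons_append, List.length_cons, List.length_append, hp1, hq1]
        omega
      · simp only [List.cons_append, wsum_cons, wsum_append, hp2, hq2, val_true, val_false]
        ring
      · rw [np_A _ _ hp3 hp2]; exact hq3⟩
  | ⟨k, Sum.inr (p, q)⟩ => ⟨false :: p.1 ++ true :: q.1, by
      obtain ⟨hp1, hp2, hp3⟩ := p.2
      obtain ⟨hq1, hq2, hq3⟩ := q.2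
      have hk := k.isLt
      have hc : 2 * p.1.count true = 2 * (k : ℕ) := by
        rw [two_mul_count_true p.1 hp2, hp1]
      refine ⟨?_, ?_, ?_⟩
      · simp only [List.cons_append, List.length_cons, List.length_append, hp1, hq1]
        omega
      · simp only [List.cons_append, wsum_cons, wsum_append, hp2, hq2, val_true, val_false]
        ring
      · rw [np_B _ _ hp3 hp2]
        have : p.1.count true = (k : ℕ) := by omega
        rw [this]
        exact hq3⟩


lemma sep_aux_nneg {p p' q q' : List Bool} (h : p ++ false :: q = p' ++ false :: q')
    (hp : wsum p = 0) (hn' : nneg p') (hlt : p.length + 1 ≤ p'.length) : False := by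
  have h1 : (p ++ false :: q).take (p.length + 1) = p ++ [false] := by
    rw [List.take_append]; simp
  have h2 : (p' ++ false :: q').take (p.length + 1) = p'.take (p.length + 1) :=
    List.take_append_of_le_length hlt
  have h3 : p'.take (p.length + 1) = p ++ [false] := by rw [← h2, ← h, h1]
  have h4 := hn' (p.length + 1)
  rw [h3] at h4
  simp [wsum_append, hp, wsum_cons] at h4

lemma sep_aux_npos {p p' q q' : List Bool} (h : p ++ true :: q = p' ++ true :: q')
    (hp : wsum p = 0) (hn' : npos p') (hlt : p.length + 1 ≤ p'.length) : False := by
  have h1 : (p ++ true :: q).take (p.length + 1) = p ++ [true] := by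
    rw [List.take_append]; simp
  have h2 : (p' ++ true :: q').take (p.length + 1) = p'.take (p.length + 1) :=
    List.take_append_of_le_length hlt
  have h3 : p'.take (p.length + 1) = p ++ [true] := by rw [← h2, ← h, h1]
  have h4 := hn' (p.length + 1)
  rw [h3] at h4
  simp [wsum_append, hp, wsum_cons] at h4

lemma sep_eq_nneg {p p' q q' : List Bool} (h : p ++ false :: q = p' ++ false :: q')
    (hp : wsum p = 0) (hp' : wsum p' = 0) (hn : nneg p) (hn' : nneg p')
    (he : ∃ a, p.length = 2 * a) (he' : ∃ a, p'.length = 2 * a) : p = p' ∧ q = q' := by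
  have hlen : p.length = p'.length := by
    obtain ⟨a, ha⟩ := he; obtain ⟨b, hb⟩ := he'
    rcases lt_trichotomy p.length p'.length with hlt | heq | hgt
    · exact absurd (sep_aux_nneg h hp hn' (by omega)) (fun x => x)
    · exact heq
    · exact absurd (sep_aux_nneg h.symm hp' hn (by omega)) (fun x => x)
  obtain ⟨h1, h2⟩ := List.append_inj h hlen
  exact ⟨h1, by injection h2⟩

lemma sep_eq_npos {p p' q q' : List Bool} (h : p ++ true :: q = p' ++ true :: q')
    (hp : wsum p = 0) (hp' : wsum p' = 0) (hn : npos p) (hn' : npos p')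
    (he : ∃ a, p.length = 2 * a) (he' : ∃ a, p'.length = 2 * a) : p = p' ∧ q = q' := by
  have hlen : p.length = p'.length := by
    obtain ⟨a, ha⟩ := he; obtain ⟨b, hb⟩ := he'
    rcases lt_trichotomy p.length p'.length with hlt | heq | hgt
    · exact absurd (sep_aux_npos h hp hn' (by omega)) (fun x => x)
    · exact heq
    · exact absurd (sep_aux_npos h.symm hp' hn (by omega)) (fun x => x)
  obtain ⟨h1, h2⟩ := List.append_inj h hlen
  exact ⟨h1, by injection h2⟩

lemma finj (n m : ℕ) : Function.Injective (f n m) := by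
  rintro ⟨k, x⟩ ⟨k', x'⟩ h
  have h' : (f n m ⟨k, x⟩).1 = (f n m ⟨k', x'⟩).1 := congrArg Subtype.val h
  rcases x with ⟨⟨pv, hp1, hp2, hp3⟩, ⟨qv, hq1, hq2, hq3⟩⟩ | ⟨⟨pv, hp1, hp2, hp3⟩, ⟨qv, hq1, hq2, hq3⟩⟩ <;>
    rcases x' with ⟨⟨pv', hp1', hp2', hp3'⟩, ⟨qv', hq1', hq2', hq3'⟩⟩ | ⟨⟨pv', hp1', hp2', hp3'⟩, ⟨qv', hq1', hq2', hq3'⟩⟩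
  · simp only [f, List.cons_append, List.cons.injEq, true_and] at h'
    obtain ⟨hpe, hqe⟩ := sep_eq_nneg h' hp2 hp2' hp3 hp3' ⟨k, by omega⟩ ⟨k', by omega⟩
    subst hpe; subst hqe
    have hkk : k = k' := Fin.ext (by omega)
    subst hkk
    rfl
  · exfalso; simp only [f, List.cons_append, List.cons.injEq] at h'
    exact Bool.noConfusion h'.1
  · exfalso; simp only [f, List.cons_append, List.cons.injEq] at h'
    exact Bool.noConfusion h'.1
  · simp only [f, List.cons_append, List.cons.injEq, true_and] at h'
    obtain ⟨hpe, hqe⟩ := sep_eq_npos h' hp2 hp2' hp3 hp3' ⟨k, by omega⟩ ⟨k', by omega⟩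
    subst hpe; subst hqe
    have hkk : k = k' := Fin.ext (by omega)
    subst hkk
    rfl


lemma val_cases (c : Bool) : val c = 1 ∨ val c = -1 := by cases c <;> simp

lemma fsurj (n m : ℕ) : Function.Surjective (f n m) := by
  rintro ⟨w, hw1, hw2, hw3⟩
  rcases w with _ | ⟨b, t⟩
  · exfalso; simp only [List.length_nil] at hw1; omega
  have hL : t.length = 2 * n + 1 := by
    have := hw1; simp only [List.length_cons] at this; omega
  have hex : ∃ j, 1 ≤ j ∧ j ≤ (b :: t).length ∧ wsum ((b :: t).take j) = 0 :=
    ⟨(b :: t).length, by simp only [List.length_cons]; omega, le_refl _,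
      by rw [List.take_of_length_le (le_refl _)]; exact hw2⟩
  obtain ⟨r, ⟨hr1, hr2, hr3⟩, hrmin⟩ :
      ∃ r, (1 ≤ r ∧ r ≤ (b :: t).length ∧ wsum ((b :: t).take r) = 0) ∧
        ∀ j, j < r → ¬(1 ≤ j ∧ j ≤ (b :: t).length ∧ wsum ((b :: t).take j) = 0) :=
    ⟨Nat.find hex, Nat.find_spec hex, fun j hj => Nat.find_min hex hj⟩
  simp only [List.length_cons] at hr2
  have hmin : ∀ j, 1 ≤ j → j < r → wsum ((b :: t).take j) ≠ 0 := by
    intro j h1 h2 h0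
    exact hrmin j h2 ⟨h1, by simp only [List.length_cons]; omega, h0⟩
  have hcnt := two_mul_count_true ((b :: t).take r) hr3
  rw [List.length_take, List.length_cons, min_eq_left (by omega)] at hcnt
  obtain ⟨k, hk⟩ : ∃ k, r = 2 * k + 2 := ⟨((b :: t).take r).count true - 1, by omega⟩
  subst hk
  have hkn : k ≤ n := by omega
  cases b with
  | true =>
    have claim : ∀ j, 1 ≤ j → j < 2 * k + 2 → 1 ≤ wsum ((true :: t).take j) := by
      intro j
      induction j with
      | zero => omega
      | succ i ih =>
        intro _ h2
        by_cases hi : 1 ≤ i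
        · have hiv := ih hi (by omega)
          have hs := wsum_take_succ (true :: t) i (by simp only [List.length_cons]; omega)
          have hne := hmin (i + 1) (by omega) h2
          have hv := val_cases ((true :: t)[i]'(by simp only [List.length_cons]; omega))
          omega
        · have hi0 : i = 0 := by omega
          subst hi0
          simp only [List.take_succ_cons, List.take_zero, wsum_cons, wsum_nil, val_true]
          omega
    have hidx : 2 * k + 1 < (true :: t).length := by simp only [List.length_cons]; omega
    have hlast := wsum_take_succ (true :: t) (2 * k + 1) hidx
    rw [show 2 * k + 1 + 1 = 2 * k + 2 by omega] at hlast
    have hprev : 1 ≤ wsum ((true :: t).take (2 * k + 1)) := claim (2 * k + 1) (by omega) (by omega)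
    have hlf : (true :: t)[2 * k + 1]'hidx = false := by
      cases hb2 : (true :: t)[2 * k + 1]'hidx with
      | false => rfl
      | true => exfalso; rw [hb2, val_true] at hlast; omega
    rw [hlf, val_false] at hlast
    have hprev1 : wsum ((true :: t).take (2 * k + 1)) = 1 := by omega
    have hidx2 : 2 * k < t.length := by omega
    have h2 : t[2 * k]'hidx2 = false := by
      rw [← hlf]; rw [List.getElem_cons_succ]
    have hstruct : true :: t = true :: t.take (2 * k) ++ false :: t.drop (2 * k + 1) := by
      conv_lhs => rw [← List.take_append_drop (2 * k) t]
      rw [List.drop_eq_getElem_cons hidx2, h2]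
      rfl
    have hplen : (t.take (2 * k)).length = 2 * k := by rw [List.length_take]; omega
    have hpsum : wsum (t.take (2 * k)) = 0 := by
      have h3 : (true :: t).take (2 * k + 1) = true :: t.take (2 * k) := List.take_succ_cons
      rw [h3, wsum_cons, val_true] at hprev1
      omega
    have hpn : nneg (t.take (2 * k)) := by
      intro s
      by_cases hs : 2 * k ≤ s
      · rw [List.take_of_length_le (by rw [hplen]; omega), hpsum]
      · have hc := claim (s + 1) (by omega) (by omega)
        rw [List.take_succ_cons, wsum_cons, val_true] at hc
        rw [List.take_take, min_eq_left (by omega)]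
        omega
    have hqlen : (t.drop (2 * k + 1)).length = 2 * (n - k) := by rw [List.length_drop]; omega
    have hqsum : wsum (t.drop (2 * k + 1)) = 0 := by
      have := hw2
      rw [hstruct, List.cons_append, wsum_cons, wsum_append, wsum_cons, hpsum, val_true,
        val_false] at this
      omega
    have hqnp : np 0 (t.drop (2 * k + 1)) = m := by
      have := hw3
      rw [hstruct, np_A _ _ hpn hpsum] at this
      exact this
    exact ⟨⟨⟨k, by omega⟩, Sum.inl (⟨t.take (2 * k), hplen, hpsum, hpn⟩,
      ⟨t.drop (2 * k + 1), hqlen, hqsum, hqnp⟩)⟩, Subtype.ext hstruct.symm⟩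
  | false =>
    have claim : ∀ j, 1 ≤ j → j < 2 * k + 2 → wsum ((false :: t).take j) ≤ -1 := by
      intro j
      induction j with
      | zero => omega
      | succ i ih =>
        intro _ h2
        by_cases hi : 1 ≤ i
        · have hiv := ih hi (by omega)
          have hs := wsum_take_succ (false :: t) i (by simp only [List.length_cons]; omega)
          have hne := hmin (i + 1) (by omega) h2
          have hv := val_cases ((false :: t)[i]'(by simp only [List.length_cons]; omega))
          omega
        · have hi0 : i = 0 := by omega
          subst hi0
          simp only [List.take_succ_cons, List.take_zero, wsum_cons, wsum_nil, val_false]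
          omega
    have hidx : 2 * k + 1 < (false :: t).length := by simp only [List.length_cons]; omega
    have hlast := wsum_take_succ (false :: t) (2 * k + 1) hidx
    rw [show 2 * k + 1 + 1 = 2 * k + 2 by omega] at hlast
    have hprev : wsum ((false :: t).take (2 * k + 1)) ≤ -1 := claim (2 * k + 1) (by omega) (by omega)
    have hlf : (false :: t)[2 * k + 1]'hidx = true := by
      cases hb2 : (false :: t)[2 * k + 1]'hidx with
      | true => rfl
      | false => exfalso; rw [hb2, val_false] at hlast; omega
    rw [hlf, val_true] at hlast
    have hprev1 : wsum ((false :: t).take (2 * k + 1)) = -1 := by omega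
    have hidx2 : 2 * k < t.length := by omega
    have h2 : t[2 * k]'hidx2 = true := by
      rw [← hlf]; rw [List.getElem_cons_succ]
    have hstruct : false :: t = false :: t.take (2 * k) ++ true :: t.drop (2 * k + 1) := by
      conv_lhs => rw [← List.take_append_drop (2 * k) t]
      rw [List.drop_eq_getElem_cons hidx2, h2]
      rfl
    have hplen : (t.take (2 * k)).length = 2 * k := by rw [List.length_take]; omega
    have hpsum : wsum (t.take (2 * k)) = 0 := by
      have h3 : (false :: t).take (2 * k + 1) = false :: t.take (2 * k) := List.take_succ_cons
      rw [h3, wsum_cons, val_false] at hprev1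
      omega
    have hpn : npos (t.take (2 * k)) := by
      intro s
      by_cases hs : 2 * k ≤ s
      · rw [List.take_of_length_le (by rw [hplen]; omega), hpsum]
      · have hc := claim (s + 1) (by omega) (by omega)
        rw [List.take_succ_cons, wsum_cons, val_false] at hc
        rw [List.take_take, min_eq_left (by omega)]
        omega
    have hqlen : (t.drop (2 * k + 1)).length = 2 * (n - k) := by rw [List.length_drop]; omega
    have hqsum : wsum (t.drop (2 * k + 1)) = 0 := by
      have := hw2
      rw [hstruct, List.cons_append, wsum_cons, wsum_append, wsum_cons, hpsum, val_false,
        val_true] at this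
      omega
    have hcnt2 : (t.take (2 * k)).count true = k := by
      have := two_mul_count_true (t.take (2 * k)) hpsum
      rw [hplen] at this
      omega
    have hqnp : (k + 1) + np 0 (t.drop (2 * k + 1)) = m := by
      have := hw3
      rw [hstruct, np_B _ _ hpn hpsum, hcnt2] at this
      omega
    exact ⟨⟨⟨k, by omega⟩, Sum.inr (⟨t.take (2 * k), hplen, hpsum, hpn⟩,
      ⟨t.drop (2 * k + 1), hqlen, hqsum, hqnp⟩)⟩, Subtype.ext hstruct.symm⟩


lemma card_step (n m : ℕ) :
    Nat.card (Sub (n + 1) m) =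
      ∑ k ∈ Finset.range (n + 1),
        (Nat.card (Dy k) * Nat.card (Sub (n - k) m) +
         Nat.card (An k) * Nat.card (SubB (n - k) (k + 1) m)) := by
  have h1 : Nat.card (Sub (n + 1) m) = Nat.card (T n m) :=
    (Nat.card_eq_of_bijective (f n m) ⟨finj n m, fsurj n m⟩).symm
  have h2 : Nat.card (T n m) =
      ∑ k : Fin (n + 1),
        Nat.card ((Dy k × Sub (n - k) m) ⊕ (An k × SubB (n - k) (k + 1) m)) :=
    card_sigma_fin _
  rw [h1, h2, Fin.sum_univ_eq_sum_range
    (fun k => Nat.card ((Dy k × Sub (n - k) m) ⊕ (An k × SubB (n - k) (k + 1) m)))]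
  apply Finset.sum_congr rfl
  intro k _
  rw [Nat.card_sum, Nat.card_prod, Nat.card_prod]

lemma card_Dy_eq (k : ℕ) : Nat.card (Dy k) = Nat.card (Sub k 0) := by
  apply Nat.card_congr
  apply Equiv.subtypeEquivRight
  intro w
  constructor
  · rintro ⟨h1, h2, h3⟩
    exact ⟨h1, h2, np_eq_zero 0 w (fun t => by have := h3 t; omega)⟩
  · rintro ⟨h1, h2, h3⟩
    exact ⟨h1, h2, nneg_of_np_zero w (by omega) h3⟩

lemma val_not (b : Bool) : val (!b) = - val b := by cases b <;> simp

lemma wsum_map_not (w : List Bool) : wsum (w.map not) = - wsum w := by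
  induction w with
  | nil => simp
  | cons b t ih => simp [wsum_cons, ih, val_not]; ring

lemma card_An_eq (k : ℕ) : Nat.card (An k) = Nat.card (Dy k) := by
  apply Nat.card_congr
  refine ⟨fun p => ⟨p.1.map not, ?_, ?_, ?_⟩, fun p => ⟨p.1.map not, ?_, ?_, ?_⟩, ?_, ?_⟩
  · rw [List.length_map]; exact p.2.1
  · rw [wsum_map_not, p.2.2.1]; ring
  · intro t
    rw [← List.map_take, wsum_map_not]
    have := p.2.2.2 t
    omega
  · rw [List.length_map]; exact p.2.1
  · rw [wsum_map_not, p.2.2.1]; ring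
  · intro t
    rw [← List.map_take, wsum_map_not]
    have := p.2.2.2 t
    omega
  · intro p
    apply Subtype.ext
    simp only [List.map_map]
    have : (not ∘ not) = id := by funext x; simp
    rw [this, List.map_id]
  · intro p
    apply Subtype.ext
    simp only [List.map_map]
    have : (not ∘ not) = id := by funext x; simp
    rw [this, List.map_id]

lemma card_SubB_low (n j m : ℕ) (h : j ≤ m) :
    Nat.card (SubB n j m) = Nat.card (Sub n (m - j)) := by
  apply Nat.card_congr
  apply Equiv.subtypeEquivRight
  intro w
  constructor <;> rintro ⟨h1, h2, h3⟩ <;> exact ⟨h1, h2, by omega⟩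

lemma card_SubB_high (n j m : ℕ) (h : m < j) : Nat.card (SubB n j m) = 0 := by
  have : IsEmpty (SubB n j m) := ⟨fun x => by obtain ⟨w, h1, h2, h3⟩ := x; omega⟩
  exact Nat.card_of_isEmpty

lemma np_le_count (h : ℤ) (w : List Bool) : np h w ≤ w.count true := by
  induction w generalizing h with
  | nil => simp
  | cons b t ih =>
    rw [np_cons]
    cases b with
    | true =>
      rw [List.count_cons_self]
      have := ih (h + val true)
      split_ifs <;> omega
    | false =>
      rw [if_neg (by simp), List.count_cons_of_ne (by simp)]
      exact Nat.zero_add _ ▸ ih (h + val false)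

lemma card_Sub_high (n m : ℕ) (h : n < m) : Nat.card (Sub n m) = 0 := by
  have : IsEmpty (Sub n m) := by
    constructor
    rintro ⟨w, h1, h2, h3⟩
    have hc := two_mul_count_true w h2
    have hle := np_le_count 0 w
    omega
  exact Nat.card_of_isEmpty

lemma card_Sub_zero : Nat.card (Sub 0 0) = 1 := by
  rw [Nat.card_eq_one_iff_unique]
  constructor
  · constructor
    rintro ⟨w, h1, -, -⟩ ⟨w', h1', -, -⟩
    apply Subtype.ext
    simp only
    rw [List.length_eq_zero_iff.mp (by omega : w.length = 0),
      List.length_eq_zero_iff.mp (by omega : w'.length = 0)]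
  · exact ⟨⟨[], by simp, rfl, rfl⟩⟩

lemma catalan_sum_split (N m : ℕ) (hm : m ≤ N + 1) :
    (∑ k ∈ Finset.range (N + 1), catalan k * (if m + k ≤ N then catalan (N - k) else 0)) +
    (∑ k ∈ Finset.range (N + 1), catalan k * (if k + 1 ≤ m then catalan (N - k) else 0)) =
    catalan (N + 1) := by
  rw [← Finset.sum_range_reflect (fun k => catalan k * (if k + 1 ≤ m then catalan (N - k) else 0))
    (N + 1)]
  rw [← Finset.sum_add_distrib]
  have hc : catalan (N + 1) = ∑ k ∈ Finset.range (N + 1), catalan k * catalan (N - k) := by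
    rw [catalan_succ]
    exact Fin.sum_univ_eq_sum_range (fun i => catalan i * catalan (N - i)) (N + 1)
  rw [hc]
  apply Finset.sum_congr rfl
  intro k hk
  have hkN : k ≤ N := by
    simp only [Finset.mem_range] at hk; omega
  have e1 : N + 1 - 1 - k = N - k := by omega
  rw [e1]
  have e2 : N - (N - k) = k := by omega
  rw [e2]
  by_cases h : m + k ≤ N
  · rw [if_pos h, if_neg (by omega)]
    ring
  · rw [if_neg h, if_pos (by omega)]
    ring

theorem card_Sub (n : ℕ) : ∀ m, m ≤ n → Nat.card (Sub n m) = catalan n := by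
  induction n using Nat.strong_induction_on with
  | _ n ih =>
    match n with
    | 0 =>
      intro m hm
      have hm0 : m = 0 := by omega
      subst hm0
      rw [card_Sub_zero, catalan_zero]
    | N + 1 =>
      intro m hm
      rw [card_step]
      have hstep : ∀ k ∈ Finset.range (N + 1),
          Nat.card (Dy k) * Nat.card (Sub (N - k) m) +
            Nat.card (An k) * Nat.card (SubB (N - k) (k + 1) m) =
          catalan k * (if m + k ≤ N then catalan (N - k) else 0) +
            catalan k * (if k + 1 ≤ m then catalan (N - k) else 0) := by
        intro k hk
        have hkN : k ≤ N := by simp only [Finset.mem_range] at hk; omega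
        have hDy : Nat.card (Dy k) = catalan k := by
          rw [card_Dy_eq]; exact ih k (by omega) 0 (by omega)
        have hAn : Nat.card (An k) = catalan k := by
          rw [card_An_eq, card_Dy_eq]; exact ih k (by omega) 0 (by omega)
        have hS : Nat.card (Sub (N - k) m) = if m + k ≤ N then catalan (N - k) else 0 := by
          split_ifs with h
          · exact ih (N - k) (by omega) m (by omega)
          · exact card_Sub_high _ _ (by omega)
        have hSB : Nat.card (SubB (N - k) (k + 1) m) =
            if k + 1 ≤ m then catalan (N - k) else 0 := by
          split_ifs with h
          · rw [card_SubB_low _ _ _ h]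
            exact ih (N - k) (by omega) (m - (k + 1)) (by omega)
          · exact card_SubB_high _ _ _ (by omega)
        rw [hDy, hAn, hS, hSB]
      rw [Finset.sum_congr rfl hstep, Finset.sum_add_distrib]
      exact catalan_sum_split N m hm


def toB (s : ℤ × ℤ) : Bool := decide (s.2 = 1)
def fromB (b : Bool) : ℤ × ℤ := (1, val b)

@[simp] lemma toB_up : toB ((1:ℤ), (1:ℤ)) = true := by simp [toB]
@[simp] lemma toB_down : toB ((1:ℤ), (-1:ℤ)) = false := by simp [toB]
@[simp] lemma toB_fromB (b : Bool) : toB (fromB b) = b := by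
  cases b <;> simp [toB, fromB]

lemma zip_scanl_red (P : (ℤ × ℤ) × ℤ → Bool) (s : ℤ × ℤ) (L : List (ℤ × ℤ)) (h : ℤ) :
    ((s :: L).zip ((((s :: L).map Prod.snd).scanl (· + ·) h)).tail).countP P
      = (if P (s, h + s.2) then 1 else 0)
        + (L.zip (((L.map Prod.snd).scanl (· + ·) (h + s.2))).tail).countP P := by
  cases L with
  | nil => simp [List.scanl, List.countP_cons]
  | cons a L' =>
    simp only [List.map_cons, List.scanl_cons, List.singleton_append, List.tail_cons,
      List.zip_cons_cons, List.countP_cons]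
    omega

lemma np_bridge (L : List (ℤ × ℤ))
    (hL : ∀ s ∈ L, s = ((1:ℤ), (1:ℤ)) ∨ s = ((1:ℤ), (-1:ℤ))) :
    ∀ h : ℤ, (L.zip (((L.map Prod.snd).scanl (· + ·) h).tail)).countP
      (fun p => decide (p.1 = ((1:ℤ), (1:ℤ)) ∧ p.2 ≤ 0)) = np h (L.map toB) := by
  induction L with
  | nil => intro h; rfl
  | cons s L ih =>
    intro h
    have ih' := ih (fun x hx => hL x (List.mem_cons_of_mem _ hx)) (h + s.2)
    rw [zip_scanl_red _ s L h, ih', List.map_cons, np_cons]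
    rcases hL s List.mem_cons_self with rfl | rfl
    · simp only [toB_up, val_true]
      by_cases hc : h + 1 ≤ 0
      · rw [if_pos (by simpa using hc), if_pos ⟨by simp, hc⟩]
      · rw [if_neg (by simpa using hc), if_neg (by simp [hc])]
    · simp only [toB_down, val_false]
      rw [if_neg (by simp), if_neg (by simp)]

lemma wsum_toB (L : List (ℤ × ℤ))
    (hL : ∀ s ∈ L, s = ((1:ℤ), (1:ℤ)) ∨ s = ((1:ℤ), (-1:ℤ))) :
    wsum (L.map toB) = (L.map Prod.snd).sum := by
  unfold wsum
  rw [List.map_map]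
  congr 1
  apply List.map_congr_left
  intro s hs
  rcases hL s hs with rfl | rfl <;> decide

end CF

/-- The classical Chung-Feller theorem: the number of lattice paths from `(0,0)` to
`(2n,0)` with steps `(1,1)` and `(1,-1)` having exactly `m` up-steps whose ending
height is `≤ 0` equals the `n`-th Catalan number `(2n choose n)/(n+1)`. -/
theorem chung_feller_dyck (n m : ℕ) (hm : m ≤ n) :
    Nat.card {L : List (ℤ × ℤ) //
      L.length = 2 * n ∧
      (∀ s ∈ L, s = ((1 : ℤ), (1 : ℤ)) ∨ s = ((1 : ℤ), (-1 : ℤ))) ∧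
      (L.map Prod.snd).sum = 0 ∧
      ((L.zip (((L.map Prod.snd).scanl (· + ·) 0).tail)).countP
        (fun p => decide (p.1 = ((1 : ℤ), (1 : ℤ)) ∧ p.2 ≤ 0))) = m} =
    (2 * n).choose n / (n + 1) := by
  have h2 : (2 * n).choose n / (n + 1) = catalan n := by
    rw [catalan_eq_centralBinom_div]; rfl
  rw [h2, ← CF.card_Sub n m hm]
  apply Nat.card_congr
  refine ⟨fun x => ⟨x.1.map CF.toB, ?_, ?_, ?_⟩,
    fun x => ⟨x.1.map CF.fromB, ?_, ?_, ?_, ?_⟩, ?_, ?_⟩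
  · rw [List.length_map]; exact x.2.1
  · rw [CF.wsum_toB x.1 x.2.2.1]; exact x.2.2.2.1
  · rw [← CF.np_bridge x.1 x.2.2.1 0]; exact x.2.2.2.2
  · rw [List.length_map]; exact x.2.1
  · intro s hs
    rw [List.mem_map] at hs
    obtain ⟨b, -, rfl⟩ := hs
    cases b
    · right; rfl
    · left; rfl
  · rw [List.map_map]
    have hc : Prod.snd ∘ CF.fromB = CF.val := rfl
    rw [hc]
    exact x.2.2.1
  · have hmem : ∀ s ∈ x.1.map CF.fromB,
        s = ((1 : ℤ), (1 : ℤ)) ∨ s = ((1 : ℤ), (-1 : ℤ)) := by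
      intro s hs
      rw [List.mem_map] at hs
      obtain ⟨b, -, rfl⟩ := hs
      cases b
      · right; rfl
      · left; rfl
    rw [CF.np_bridge _ hmem 0, List.map_map]
    have hc : CF.toB ∘ CF.fromB = id := funext CF.toB_fromB
    rw [hc, List.map_id]
    exact x.2.2.2
  · intro x
    apply Subtype.ext
    simp only [List.map_map]
    conv_rhs => rw [← List.map_id x.1]
    apply List.map_congr_left
    intro s hs
    rcases x.2.2.1 s hs with rfl | rfl
    · rfl
    · rfl
  · intro x
    apply Subtype.ext
    simp only [List.map_map]
    have hc : CF.toB ∘ CF.fromB = id := funext CF.toB_fromB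
    rw [hc, List.map_id]
end

section
/- For each 0 ≤ m ≤ n, the number of lattice paths from (0,0) to (n+1,1) with steps (1,1), (1,-1), (1,0), classified by the position of the rightmost minimum, such that the number of steps weakly to the left of the rightmost minimum point equals m, is the n-th Motzkin number m_n (in particular it is independent of m). -/
/-!
Every point after the rightmost minimum is strictly higher, so the step leaving it is an up step
and the path is `A ++ (1,1) :: B` with `A` of length `m`. The heights along `B ++ A` are the
heights of the original points measured from the minimum, lowered by one for the points after
the up step. Hence `B ++ A` stays weakly above the axis exactly when no point lies below the
minimum and every later point lies strictly above it. Cutting a Motzkin path after `n - m` steps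
and reinserting the up step inverts this.
-/

/-- The `n`-th Motzkin number: the number of lattice paths from `(0,0)` to `(n,0)`
with steps `(1,1)`, `(1,-1)`, `(1,0)` never going below the x-axis. -/
noncomputable def motzkin (n : ℕ) : ℕ :=
  Nat.card {L : List (ℤ × ℤ) //
    L.length = n ∧
    (∀ s ∈ L, s = ((1 : ℤ), (1 : ℤ)) ∨ s = ((1 : ℤ), (-1 : ℤ)) ∨ s = ((1 : ℤ), (0 : ℤ))) ∧
    (L.map Prod.snd).sum = 0 ∧
    (∀ h ∈ (L.map Prod.snd).scanl (· + ·) 0, 0 ≤ h)}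

/-- The list of heights of the points of a path (starting with the initial height 0). -/
def pts (L : List (ℤ × ℤ)) : List ℤ := (L.map Prod.snd).scanl (· + ·) 0

/-- The point with index `i` is the rightmost minimum point of the path `L`. -/
def IsRightmostMin (L : List (ℤ × ℤ)) (i : ℕ) : Prop :=
  i < (pts L).length ∧ (∀ x ∈ pts L, (pts L).getD i 0 ≤ x) ∧
    ∀ k, i < k → k < (pts L).length → (pts L).getD i 0 < (pts L).getD k 0

theorem Nat.forall_le_add_iff {p : ℕ → Prop} {a b : ℕ} :
    (∀ k ≤ a + b, p k) ↔ (∀ k ≤ a, p k) ∧ ∀ j ≤ b, p (a + j) := by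
  refine ⟨fun h => ⟨fun k hk => h k (by omega), fun j hj => h _ (by omega)⟩, ?_⟩
  rintro ⟨h₁, h₂⟩ k hk
  rcases le_or_gt k a with hka | hak
  · exact h₁ k hka
  · obtain ⟨j, rfl⟩ := Nat.exists_eq_add_of_lt hak
    exact h₂ (j + 1) (by omega)

namespace LatticePath

def IsStep (s : ℤ × ℤ) : Prop := s = (1, 1) ∨ s = (1, -1) ∨ s = (1, 0)

def height (L : List (ℤ × ℤ)) (i : ℕ) : ℤ := ((L.map Prod.snd).take i).sum

variable {L A B : List (ℤ × ℤ)} {i j : ℕ}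

lemma height_of_length_le (h : L.length ≤ i) : height L i = (L.map Prod.snd).sum := by
  rw [height, List.take_of_length_le (by simpa using h)]

lemma height_append_of_le (h : i ≤ A.length) : height (A ++ B) i = height A i := by
  simp [height, List.take_append, Nat.sub_eq_zero_of_le h]

lemma height_append_add :
    height (A ++ B) (A.length + j) = (A.map Prod.snd).sum + height B j := by
  simp [height, List.take_append, List.take_of_length_le]

lemma height_cons_succ (s : ℤ × ℤ) : height (s :: L) (i + 1) = s.2 + height L i := by
  simp [height]

lemma height_succ (h : i < L.length) : height L (i + 1) = height L i + L[i].2 := by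
  simp [height, List.take_add_one, List.getElem?_eq_getElem (by simpa using h)]

lemma length_pts : (pts L).length = L.length + 1 := by simp [pts]

lemma getElem_pts (h : i < (pts L).length) : (pts L)[i] = height L i := by
  simp [pts, height, List.sum_eq_foldl]

lemma getD_pts (h : i ≤ L.length) : (pts L).getD i 0 = height L i := by
  rw [List.getD_eq_getElem _ _ (by rw [length_pts]; omega), getElem_pts]

lemma forall_mem_pts {p : ℤ → Prop} : (∀ x ∈ pts L, p x) ↔ ∀ i ≤ L.length, p (height L i) := by
  simp only [List.forall_mem_iff_getElem, getElem_pts, length_pts, Nat.lt_succ_iff]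

lemma isRightmostMin_iff : IsRightmostMin L i ↔ i ≤ L.length ∧
    (∀ k ≤ i, height L i ≤ height L k) ∧
    ∀ k, i < k → k ≤ L.length → height L i < height L k := by
  rw [IsRightmostMin, forall_mem_pts, length_pts, Nat.lt_succ_iff]
  refine and_congr_right fun hi => ?_
  rw [getD_pts hi]
  constructor
  · rintro ⟨hmin, hlater⟩
    refine ⟨fun k hk => hmin k (hk.trans hi), fun k hik hk => ?_⟩
    have := hlater k hik (by omega)
    rwa [getD_pts hk] at this
  · rintro ⟨hbefore, hlater⟩
    refine ⟨fun k hk => ?_, fun k hik hk => ?_⟩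
    · rcases le_or_gt k i with hki | hik
      · exact hbefore k hki
      · exact (hlater k hik hk).le
    · rw [getD_pts (by omega)]
      exact hlater k hik (by omega)

lemma snd_getElem_pos_of_isRightmostMin (h : IsRightmostMin L i) (hi : i < L.length) :
    0 < L[i].2 := by
  have := (isRightmostMin_iff.mp h).2.2 (i + 1) i.lt_succ_self hi
  rw [height_succ hi] at this
  linarith

lemma getElem_eq_up_of_isRightmostMin (hL : ∀ s ∈ L, IsStep s) (h : IsRightmostMin L i)
    (hi : i < L.length) : L[i] = (1, 1) := by
  have hpos := snd_getElem_pos_of_isRightmostMin h hi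
  rcases hL _ (L.getElem_mem hi) with hs | hs | hs <;> rw [hs] at hpos ⊢ <;> norm_num at hpos

lemma isRightmostMin_append_cons_iff {u : ℤ × ℤ} (hu : u.2 = 1) :
    IsRightmostMin (A ++ u :: B) A.length ↔
      (∀ k ≤ A.length, (A.map Prod.snd).sum ≤ height A k) ∧ ∀ j ≤ B.length, 0 ≤ height B j := by
  have hlen : (A ++ u :: B).length = A.length + 1 + B.length := by
    rw [List.length_append, List.length_cons]; omega
  have hlater (j : ℕ) : height (A ++ u :: B) (A.length + j + 1) =
      (A.map Prod.snd).sum + 1 + height B j := by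
    rw [add_assoc, height_append_add, height_cons_succ, hu, add_assoc]
  rw [isRightmostMin_iff, hlen, height_append_of_le le_rfl, height_of_length_le le_rfl,
    and_iff_right (by omega)]
  refine and_congr (forall₂_congr fun k hk => by rw [height_append_of_le hk])
    ⟨fun h j hj => ?_, fun h k hk hk' => ?_⟩
  · have := h (A.length + j + 1) (by omega) (by omega)
    rw [hlater] at this
    omega
  · obtain ⟨j, rfl⟩ := Nat.exists_eq_add_of_lt hk
    rw [hlater]
    have := h j (by omega)
    omega

lemma forall_mem_pts_append_nonneg_iff :
    (∀ x ∈ pts (B ++ A), 0 ≤ x) ↔ (∀ j ≤ B.length, 0 ≤ height B j) ∧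
      ∀ k ≤ A.length, 0 ≤ (B.map Prod.snd).sum + height A k := by
  rw [forall_mem_pts, List.length_append, Nat.forall_le_add_iff]
  refine and_congr (forall₂_congr fun k hk => by rw [height_append_of_le hk]) ?_
  simp only [height_append_add]

theorem isRightmostMin_append_cons_iff_nonneg {u : ℤ × ℤ} (hu : u.2 = 1)
    (hsum : ((A ++ u :: B).map Prod.snd).sum = 1) :
    IsRightmostMin (A ++ u :: B) A.length ↔ ∀ x ∈ pts (B ++ A), 0 ≤ x := by
  have hsumB : (B.map Prod.snd).sum = -(A.map Prod.snd).sum := by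
    simp only [List.map_append, List.map_cons, List.sum_append, List.sum_cons, hu] at hsum
    linarith
  rw [isRightmostMin_append_cons_iff hu, forall_mem_pts_append_nonneg_iff, and_comm, hsumB]
  refine and_congr_right fun _ => forall₂_congr fun k _ => ?_
  constructor <;> intro h <;> linarith

def IsRightmostMinPath (n m : ℕ) (L : List (ℤ × ℤ)) : Prop :=
  L.length = n + 1 ∧ (∀ s ∈ L, IsStep s) ∧ (L.map Prod.snd).sum = 1 ∧ IsRightmostMin L m

def IsMotzkinPath (n : ℕ) (M : List (ℤ × ℤ)) : Prop :=
  M.length = n ∧ (∀ s ∈ M, IsStep s) ∧ (M.map Prod.snd).sum = 0 ∧ ∀ x ∈ pts M, 0 ≤ x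

variable {n m : ℕ}

theorem isRightmostMinPath_append_up_cons_iff (hA : A.length = m) :
    IsRightmostMinPath n m (A ++ (1, 1) :: B) ↔ IsMotzkinPath n (B ++ A) := by
  have hperm : List.Perm (A ++ (1, 1) :: B) ((1, 1) :: (B ++ A)) :=
    List.perm_middle.trans (List.perm_append_comm.cons _)
  have hlen : (A ++ (1, 1) :: B).length = (B ++ A).length + 1 := hperm.length_eq
  have hsum : ((A ++ (1, 1) :: B).map Prod.snd).sum = 1 + ((B ++ A).map Prod.snd).sum := by
    rw [(hperm.map Prod.snd).sum_eq, List.map_cons, List.sum_cons]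
  have hsteps : (∀ s ∈ A ++ (1, 1) :: B, IsStep s) ↔ ∀ s ∈ B ++ A, IsStep s := by
    simp only [hperm.mem_iff, List.mem_cons, forall_eq_or_imp, IsStep, true_or, true_and]
  unfold IsRightmostMinPath IsMotzkinPath
  rw [← hA, hsteps]
  constructor
  · rintro ⟨hn, hs, hsum1, hmin⟩
    exact ⟨by omega, hs, by omega, (isRightmostMin_append_cons_iff_nonneg rfl hsum1).mp hmin⟩
  · rintro ⟨hn, hs, hsum0, hnonneg⟩
    have hsum1 : ((A ++ (1, 1) :: B).map Prod.snd).sum = 1 := by omega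
    exact ⟨by omega, hs, hsum1, (isRightmostMin_append_cons_iff_nonneg rfl hsum1).mpr hnonneg⟩

lemma IsRightmostMinPath.take_append_up_cons_drop (hL : IsRightmostMinPath n m L) (hm : m ≤ n) :
    L.take m ++ (1, 1) :: L.drop (m + 1) = L := by
  obtain ⟨hlen, hsteps, -, hmin⟩ := hL
  have hmL : m < L.length := by omega
  rw [← getElem_eq_up_of_isRightmostMin hsteps hmin hmL, ← List.drop_eq_getElem_cons hmL,
    List.take_append_drop]

def cutAtRightmostMin (hm : m ≤ n) :
    {L // IsRightmostMinPath n m L} ≃ {M // IsMotzkinPath n M} where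
  toFun L := ⟨L.1.drop (m + 1) ++ L.1.take m,
    (isRightmostMinPath_append_up_cons_iff (by simp only [List.length_take, L.2.1]; omega)).mp
      ((L.2.take_append_up_cons_drop hm).symm ▸ L.2)⟩
  invFun M := ⟨M.1.drop (n - m) ++ (1, 1) :: M.1.take (n - m),
    (isRightmostMinPath_append_up_cons_iff (by simp only [List.length_drop, M.2.1]; omega)).mpr
      ((List.take_append_drop _ _).symm ▸ M.2)⟩
  left_inv L := by
    have hB : (L.1.drop (m + 1)).length = n - m := by simp [L.2.1]
    ext1
    simp only [List.drop_left' hB, List.take_left' hB, L.2.take_append_up_cons_drop hm]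
  right_inv M := by
    have hA : (M.1.drop (n - m)).length = m := by simp only [List.length_drop, M.2.1]; omega
    ext1
    dsimp only
    rw [List.take_left' hA, List.append_cons, List.drop_left' (by simp [hA]),
      List.take_append_drop]

end LatticePath

/-- Shapiro's Chung-Feller theorem for Motzkin paths: for `0 ≤ m ≤ n`, the number of
paths of `n+1` steps from `{(1,1),(1,-1),(1,0)}` starting at `(0,0)`, ending on the
line `y = 1`, whose rightmost minimum point is preceded by exactly `m` steps
(i.e. the rightmost minimum point has index `m`), equals the `n`-th Motzkin number. -/
theorem chung_feller_motzkin_type (n m : ℕ) (hm : m ≤ n) :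
    Nat.card {L : List (ℤ × ℤ) //
      L.length = n + 1 ∧
      (∀ s ∈ L, s = ((1 : ℤ), (1 : ℤ)) ∨ s = ((1 : ℤ), (-1 : ℤ)) ∨ s = ((1 : ℤ), (0 : ℤ))) ∧
      (L.map Prod.snd).sum = 1 ∧
      IsRightmostMin L m} = motzkin n :=
  Nat.card_congr (LatticePath.cutAtRightmostMin hm)
end

section
/- For each 0 ≤ m ≤ n, the number of lattice paths of n+1 steps from the set {(1,1),(1,-1),(1,0)} starting at (0,0) and ending on the line y=1 whose number of steps with ending height ≤ 0 equals m, is the n-th Motzkin number m_n. -/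
open Finset

theorem List.partialSums_eq_map_range {α : Type*} [AddMonoid α] (l : List α) :
    l.partialSums = (List.range (l.length + 1)).map fun j => (l.take j).sum :=
  List.ext_getElem (by simp) (by simp)

theorem List.sum_take_rotate {α : Type*} [AddCommGroup α] {l : List α} {i j : ℕ}
    (hi : i ≤ l.length) (hj : j ≤ l.length) :
    ((l.rotate i).take j).sum = if i + j ≤ l.length then (l.take (i + j)).sum - (l.take i).sum
      else l.sum - (l.take i).sum + (l.take (i + j - l.length)).sum := by
  have hsplit : (l.take i).sum + (l.drop i).sum = l.sum := by
    rw [← List.sum_append, List.take_append_drop]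
  rw [List.rotate_eq_drop_append_take hi, List.take_append, List.length_drop, List.sum_append]
  split_ifs with h
  · rw [List.take_add, List.sum_append, Nat.sub_eq_zero_of_le (by omega), List.take_zero]
    simp
  · rw [List.take_of_length_le (by simp; omega), List.take_take, min_eq_left (by omega), ← hsplit,
      show j - (l.length - i) = i + j - l.length by omega]
    abel

theorem Finset.card_filter_lt_injOn {ι α : Type*} [LinearOrder α] (s : Finset ι) {f : ι → α}
    (hf : Set.InjOn f s) : Set.InjOn (fun i => #{k ∈ s | f k < f i}) s := by
  have hlt {a b : ι} (ha : a ∈ s) (hab : f a < f b) :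
      #{k ∈ s | f k < f a} < #{k ∈ s | f k < f b} := by
    refine Finset.card_lt_card ((Finset.ssubset_iff_of_subset ?_).2 ⟨a, ?_, ?_⟩)
    · exact Finset.monotone_filter_right s fun _ _ hk => hk.trans hab
    · simp [ha, hab]
    · simp
  intro a ha b hb h
  by_contra hne
  rcases (hf.ne ha hb hne).lt_or_gt with hab | hba
  · exact (hlt ha hab).ne h
  · exact (hlt hb hba).ne' h

theorem Finset.card_filter_lt_lt_card {ι α : Type*} [LinearOrder α] {s : Finset ι} (f : ι → α)
    {i : ι} (hi : i ∈ s) : #{k ∈ s | f k < f i} < #s :=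
  Finset.card_lt_card (Finset.filter_ssubset.2 ⟨i, hi, lt_irrefl _⟩)

namespace ChungFeller

def nonposCount (l : List ℤ) : ℕ := #{j ∈ range l.length | (l.take (j + 1)).sum ≤ 0}

-- Prefix positions ordered by height, ties broken in favour of the later position.
def heightKey (l : List ℤ) (k : ℕ) : ℤ ×ₗ ℕᵒᵈ := toLex ((l.take k).sum, OrderDual.toDual k)

theorem heightKey_injective (l : List ℤ) : Function.Injective (heightKey l) := fun _ _ h =>
  OrderDual.toDual.injective (congrArg (fun x => (ofLex x).2) h)

variable {l : List ℤ}

theorem heightKey_lt_heightKey_iff {i k : ℕ} :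
    heightKey l k < heightKey l i ↔
      (l.take k).sum < (l.take i).sum ∨ (l.take k).sum = (l.take i).sum ∧ i < k := by
  simp [heightKey, Prod.Lex.toLex_lt_toLex]

theorem sum_take_rotate_nonpos_iff (hl : l.sum = 1) {i j : ℕ} (hi : i < l.length)
    (hj : j < l.length) :
    ((l.rotate i).take (j + 1)).sum ≤ 0 ↔ heightKey l ((i + j + 1) % l.length) < heightKey l i := by
  rw [List.sum_take_rotate (j := j + 1) hi.le hj, heightKey_lt_heightKey_iff, hl]
  rcases lt_trichotomy (i + j + 1) l.length with h | h | h
  · rw [Nat.mod_eq_of_lt h, if_pos (by omega), ← add_assoc]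
    omega
  · rw [h, Nat.mod_self, if_pos (by omega), ← add_assoc, h, List.take_length, hl, List.take_zero,
      List.sum_nil]
    omega
  · rw [Nat.mod_eq_sub_mod h.le, Nat.mod_eq_of_lt (by omega), if_neg (by omega), ← add_assoc]
    omega

theorem nonposCount_rotate (hl : l.sum = 1) {i : ℕ} (hi : i < l.length) :
    nonposCount (l.rotate i) = #{k ∈ range l.length | heightKey l k < heightKey l i} := by
  set N := l.length
  have hmod {a : ℕ} (ha : a < 2 * N) : a % N = if a < N then a else a - N := by
    split_ifs with h
    · exact Nat.mod_eq_of_lt h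
    · rw [Nat.mod_eq_sub_mod (by omega), Nat.mod_eq_of_lt (by omega)]
  have hleft {j : ℕ} (hj : j < N) : ((i + j + 1) % N + N - (i + 1)) % N = j := by
    rw [hmod (a := i + j + 1) (by omega)]
    split_ifs <;> rw [hmod (by omega)] <;> split_ifs <;> omega
  have hright {k : ℕ} (hk : k < N) : (i + (k + N - (i + 1)) % N + 1) % N = k := by
    rw [hmod (a := k + N - (i + 1)) (by omega)]
    split_ifs <;> rw [hmod (by omega)] <;> split_ifs <;> omega
  rw [nonposCount, List.length_rotate]
  apply Finset.card_nbij' (fun j => (i + j + 1) % N) (fun k => (k + N - (i + 1)) % N)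
  · intro j hj
    simp only [mem_coe, mem_filter, mem_range] at hj ⊢
    exact ⟨Nat.mod_lt _ (by omega), (sum_take_rotate_nonpos_iff hl hi hj.1).1 hj.2⟩
  · intro k hk
    simp only [mem_coe, mem_filter, mem_range] at hk ⊢
    have hk' : (k + N - (i + 1)) % N < N := Nat.mod_lt _ (by omega)
    exact ⟨hk', (sum_take_rotate_nonpos_iff hl hi hk').2 (by rw [hright hk.1]; exact hk.2)⟩
  · intro j hj
    exact hleft (mem_range.1 (mem_filter.1 hj).1)
  · intro k hk
    exact hright (mem_range.1 (mem_filter.1 hk).1)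

theorem nonposCount_rotate_injOn (hl : l.sum = 1) :
    Set.InjOn (fun i => nonposCount (l.rotate i)) (range l.length) := by
  intro i hi j hj h
  simp only [mem_coe, mem_range] at hi hj
  simp only [nonposCount_rotate hl hi, nonposCount_rotate hl hj] at h
  exact card_filter_lt_injOn _ (heightKey_injective l).injOn (by simpa) (by simpa) h

theorem nonposCount_rotate_lt_length (hl : l.sum = 1) {i : ℕ} (hi : i < l.length) :
    nonposCount (l.rotate i) < l.length := by
  simpa [nonposCount_rotate hl hi] using card_filter_lt_lt_card (heightKey l) (mem_range.2 hi)

theorem nonposCount_lt_length (hl : l.sum = 1) : nonposCount l < l.length := by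
  simpa using nonposCount_rotate_lt_length hl (l.length_pos_of_sum_pos (by omega))

theorem exists_nonposCount_rotate_eq (hl : l.sum = 1) {m : ℕ} (hm : m < l.length) :
    ∃ i < l.length, nonposCount (l.rotate i) = m := by
  have hsurj := Finset.surjOn_of_injOn_of_card_le (t := range l.length) _
    (fun i hi => mem_range.2 (nonposCount_rotate_lt_length hl (mem_range.1 hi)))
    (nonposCount_rotate_injOn hl) le_rfl (mem_range.2 hm)
  obtain ⟨i, hi, rfl⟩ := hsurj
  exact ⟨i, mem_range.1 hi, rfl⟩

noncomputable def rotationIndex (l : List ℤ) (m : ℕ) : ℕ :=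
  Classical.epsilon fun i => i < l.length ∧ nonposCount (l.rotate i) = m

theorem rotationIndex_spec (hl : l.sum = 1) {m : ℕ} (hm : m < l.length) :
    rotationIndex l m < l.length ∧ nonposCount (l.rotate (rotationIndex l m)) = m :=
  Classical.epsilon_spec (exists_nonposCount_rotate_eq hl hm)

def nonposClass (S : Set (ℤ × ℤ)) (N m : ℕ) : Set (List (ℤ × ℤ)) :=
  {L | L.length = N ∧ (∀ s ∈ L, s ∈ S) ∧ (L.map Prod.snd).sum = 1 ∧
    nonposCount (L.map Prod.snd) = m}

variable {S : Set (ℤ × ℤ)} {N m m' : ℕ} {L : List (ℤ × ℤ)}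

theorem rotate_mem_nonposClass (hL : L ∈ nonposClass S N m) (i : ℕ) :
    L.rotate i ∈ nonposClass S N (nonposCount ((L.map Prod.snd).rotate i)) := by
  obtain ⟨hlen, hS, hsum, -⟩ := hL
  refine ⟨by rw [List.length_rotate, hlen], fun s hs => hS s (List.mem_rotate.1 hs), ?_, ?_⟩
  · rw [List.map_rotate, (List.rotate_perm _ _).sum_eq, hsum]
  · rw [List.map_rotate]

noncomputable def rotateToCount (L : List (ℤ × ℤ)) (m : ℕ) : List (ℤ × ℤ) :=
  L.rotate (rotationIndex (L.map Prod.snd) m)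

theorem rotateToCount_mem (hL : L ∈ nonposClass S N m) (hm' : m' < N) :
    rotateToCount L m' ∈ nonposClass S N m' := by
  have hspec := rotationIndex_spec hL.2.2.1 (m := m') (by simpa [hL.1])
  have hmem := rotate_mem_nonposClass hL (rotationIndex (L.map Prod.snd) m')
  rw [hspec.2] at hmem
  exact hmem

theorem rotateToCount_rotateToCount (hL : L ∈ nonposClass S N m) (hm' : m' < N) :
    rotateToCount (rotateToCount L m') m = L := by
  have hL' := rotateToCount_mem hL hm'
  obtain ⟨hlen, -, hsum, hcount⟩ := hL
  obtain ⟨-, hj⟩ := rotationIndex_spec hL'.2.2.1 (m := m)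
    (by simpa [hL'.1, hlen, hcount] using nonposCount_lt_length hsum)
  unfold rotateToCount at hj ⊢
  rw [List.map_rotate] at hj ⊢
  rw [List.rotate_rotate] at hj ⊢
  set k := rotationIndex (L.map Prod.snd) m' + rotationIndex ((L.map Prod.snd).rotate _) m
  have hpos : 0 < (L.map Prod.snd).length := List.length_pos_of_sum_pos _ (by omega)
  have hk : k % (L.map Prod.snd).length = 0 := by
    refine nonposCount_rotate_injOn hsum (mem_range.2 (Nat.mod_lt _ hpos)) (mem_range.2 hpos) ?_
    simp only [List.rotate_mod, hj, List.rotate_zero, hcount]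
  rw [← List.rotate_mod, ← List.length_map Prod.snd, hk, List.rotate_zero]

noncomputable def nonposClassEquiv (hm : m < N) (hm' : m' < N) :
    nonposClass S N m ≃ nonposClass S N m' where
  toFun L := ⟨rotateToCount L m', rotateToCount_mem L.2 hm'⟩
  invFun L := ⟨rotateToCount L m, rotateToCount_mem L.2 hm⟩
  left_inv L := Subtype.ext (rotateToCount_rotateToCount L.2 hm')
  right_inv L := Subtype.ext (rotateToCount_rotateToCount L.2 hm)

def motzkinSteps : Set (ℤ × ℤ) := {(1, 1), (1, -1), (1, 0)}

def motzkinPaths (n : ℕ) : Set (List (ℤ × ℤ)) :=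
  {L | L.length = n ∧ (∀ s ∈ L, s ∈ motzkinSteps) ∧ (L.map Prod.snd).sum = 0 ∧
    ∀ h ∈ (L.map Prod.snd).partialSums, 0 ≤ h}

theorem motzkin_eq_card_motzkinPaths (n : ℕ) : motzkin n = Nat.card (motzkinPaths n) := rfl

theorem nonposCount_cons_eq_zero_iff (a : ℤ) (l : List ℤ) :
    nonposCount (a :: l) = 0 ↔ ∀ j ≤ l.length, 0 < a + (l.take j).sum := by
  rw [nonposCount, card_eq_zero, filter_eq_empty_iff]
  simp

theorem forall_mem_partialSums_nonneg_iff (l : List ℤ) :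
    (∀ h ∈ l.partialSums, 0 ≤ h) ↔ ∀ j ≤ l.length, 0 ≤ (l.take j).sum := by
  simp [List.partialSums_eq_map_range]

theorem cons_mem_nonposClass_zero_iff {n : ℕ} {T : List (ℤ × ℤ)} :
    (1, 1) :: T ∈ nonposClass motzkinSteps (n + 1) 0 ↔ T ∈ motzkinPaths n := by
  have hstep : ((1, 1) : ℤ × ℤ) ∈ motzkinSteps := by simp [motzkinSteps]
  have hpos (x : ℤ) : 0 < 1 + x ↔ 0 ≤ x := by omega
  simp only [nonposClass, motzkinPaths, Set.mem_ofPred_eq, List.map_cons, List.length_cons,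
    List.forall_mem_cons, List.sum_cons, nonposCount_cons_eq_zero_iff,
    forall_mem_partialSums_nonneg_iff, hstep, hpos, true_and, Nat.add_right_cancel_iff, add_eq_left]

theorem exists_eq_cons_of_mem_nonposClass_zero (hL : L ∈ nonposClass motzkinSteps N 0) :
    ∃ T, L = (1, 1) :: T := by
  obtain ⟨-, hS, hsum, hcount⟩ := hL
  obtain ⟨s, T, rfl⟩ : ∃ s T, L = s :: T := List.exists_cons_of_ne_nil (by rintro rfl; simp at hsum)
  rw [List.map_cons, nonposCount_cons_eq_zero_iff] at hcount
  have hs := hcount 0 (Nat.zero_le _)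
  rcases hS s List.mem_cons_self with rfl | rfl | rfl
  · exact ⟨T, rfl⟩
  all_goals simp at hs

theorem nonposClass_zero_eq_image (n : ℕ) :
    nonposClass motzkinSteps (n + 1) 0 = List.cons (1, 1) '' motzkinPaths n := by
  ext L
  constructor
  · intro hL
    obtain ⟨T, rfl⟩ := exists_eq_cons_of_mem_nonposClass_zero hL
    exact ⟨T, cons_mem_nonposClass_zero_iff.1 hL, rfl⟩
  · rintro ⟨T, hT, rfl⟩
    exact cons_mem_nonposClass_zero_iff.2 hT

theorem countP_zip_partialSums_tail (L : List (ℤ × ℤ)) :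
    (L.zip (L.map Prod.snd).partialSums.tail).countP (fun p => decide (p.2 ≤ 0)) =
      nonposCount (L.map Prod.snd) := by
  have hlen : (L.map Prod.snd).partialSums.tail.length ≤ L.length := by simp
  rw [← Function.comp_def (fun h : ℤ => decide (h ≤ 0)) Prod.snd, ← List.countP_map,
    List.map_snd_zip hlen, List.partialSums_eq_map_range, List.range_succ_eq_map, List.map_cons,
    List.tail_cons, List.map_map, List.countP_map, List.countP_eq_length_filter]
  rfl

end ChungFeller

open ChungFeller in
/-- Chung-Feller theorem of Dyck type for Motzkin steps: for `0 ≤ m ≤ n`, the number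
of paths of `n+1` steps from `{(1,1),(1,-1),(1,0)}` starting at `(0,0)`, ending on the
line `y = 1`, having exactly `m` steps whose ending height is `≤ 0`, equals the
`n`-th Motzkin number. -/
theorem chung_feller_dyck_type_motzkin_steps (n m : ℕ) (hm : m ≤ n) :
    Nat.card {L : List (ℤ × ℤ) //
      L.length = n + 1 ∧
      (∀ s ∈ L, s = ((1 : ℤ), (1 : ℤ)) ∨ s = ((1 : ℤ), (-1 : ℤ)) ∨ s = ((1 : ℤ), (0 : ℤ))) ∧
      (L.map Prod.snd).sum = 1 ∧
      ((L.zip (((L.map Prod.snd).scanl (· + ·) 0).tail)).countP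
        (fun p => decide (p.2 ≤ 0))) = m} = motzkin n := by
  calc _ = Nat.card (nonposClass motzkinSteps (n + 1) m) := by
        simp only [← List.partialSums.eq_def, countP_zip_partialSums_tail]; rfl
    _ = Nat.card (nonposClass motzkinSteps (n + 1) 0) :=
        Nat.card_congr (nonposClassEquiv (by omega) (by omega))
    _ = Nat.card (List.cons (1, 1) '' motzkinPaths n) := by rw [nonposClass_zero_eq_image]
    _ = Nat.card (motzkinPaths n) := Nat.card_image_of_injective List.cons_injective _
    _ = motzkin n := (motzkin_eq_card_motzkinPaths n).symm
end

section
/- For each 0 ≤ m ≤ n, the number of lattice paths of 2n steps with steps U=(1,1) and D=(1,-1) from (0,0) to (2n,0), such that the number of U-steps weakly to the left of the rightmost minimum point equals m, is the n-th Catalan number C_n (independent of m). -/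
namespace List

theorem take_append_cons_length_add {α : Type*} (A B : List α) (a : α) (j : ℕ) :
    (A ++ a :: B).take (A.length + 1 + j) = A ++ a :: B.take j := by
  rw [add_assoc, take_length_add_append, add_comm, take_succ_cons]

variable {α : Type*} [BEq α] [LawfulBEq α]

theorem exists_eq_append_cons_count_eq {a : α} {l : List α} {k : ℕ} (hk : k < l.count a) :
    ∃ s t, l = s ++ a :: t ∧ s.count a = k := by
  induction l generalizing k with
  | nil => simp at hk
  | cons b l ih =>
    by_cases hb : b = a
    · subst hb
      rcases k with _ | k
      · exact ⟨[], l, rfl, rfl⟩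
      · obtain ⟨s, t, rfl, hs⟩ := ih (by simpa using hk)
        exact ⟨b :: s, t, rfl, by simp [hs]⟩
    · obtain ⟨s, t, rfl, hs⟩ := ih (by simpa [count_cons, hb] using hk)
      exact ⟨b :: s, t, rfl, by simp [hb, hs]⟩

theorem eq_of_append_cons_eq_of_count_eq {a : α} {s t s' t' : List α}
    (h : s ++ a :: t = s' ++ a :: t') (hc : s.count a = s'.count a) : s = s' ∧ t = t' := by
  induction s generalizing s' with
  | nil =>
    cases s' with
    | nil => simpa using h
    | cons b s' => cases h; simp at hc
  | cons b s ih =>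
    cases s' with
    | nil => cases h; simp at hc
    | cons b' s' =>
      obtain ⟨rfl, htail⟩ := cons_eq_cons.mp h
      obtain ⟨rfl, rfl⟩ := ih htail (by simpa [count_cons] using hc)
      exact ⟨rfl, rfl⟩

end List

namespace ChungFeller

open List DyckStep

def height (w : List DyckStep) : ℤ := w.count U - w.count D

@[simp] lemma height_nil : height [] = 0 := rfl

@[simp] lemma height_cons_U (w : List DyckStep) : height (U :: w) = height w + 1 := by
  simp [height]; ring

@[simp] lemma height_cons_D (w : List DyckStep) : height (D :: w) = height w - 1 := by
  simp [height]; ring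

@[simp] lemma height_append (v w : List DyckStep) : height (v ++ w) = height v + height w := by
  simp only [height, count_append]; push_cast; ring

lemma height_take_add_height_drop (w : List DyckStep) (k : ℕ) :
    height (w.take k) + height (w.drop k) = height w := by
  rw [← height_append, take_append_drop]

lemma count_U_add_count_D (w : List DyckStep) : w.count U + w.count D = w.length := by
  induction w with
  | nil => rfl
  | cons s w ih => cases s <;> simp <;> omega

lemma count_U_eq_of_height_eq_zero {w : List DyckStep} {n : ℕ} (hlen : w.length = 2 * n)
    (h0 : height w = 0) : w.count U = n := by
  have := count_U_add_count_D w
  unfold height at h0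
  omega

def StaysNonneg (w : List DyckStep) : Prop := ∀ k, 0 ≤ height (w.take k)

def EndsAtMin (w : List DyckStep) : Prop := ∀ k, height (w.drop k) ≤ 0

-- `IsRightmostMin` for words: point `i` is the one reached after the steps `w.take i`.
def IsLastMin (w : List DyckStep) (i : ℕ) : Prop :=
  i ≤ w.length ∧ (∀ k ≤ w.length, height (w.take i) ≤ height (w.take k)) ∧
    ∀ k, i < k → k ≤ w.length → height (w.take i) < height (w.take k)

lemma IsLastMin.getElem_eq_U {w : List DyckStep} {i : ℕ} (hi : IsLastMin w i)
    (hlt : i < w.length) : w[i] = U := by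
  have := hi.2.2 (i + 1) (by omega) hlt
  rw [take_add_one, getElem?_eq_getElem hlt] at this
  cases h : w[i] <;> simp_all

lemma isLastMin_append_cons_iff (A B : List DyckStep) :
    IsLastMin (A ++ U :: B) A.length ↔ EndsAtMin A ∧ StaysNonneg B := by
  have hleft : ∀ k ≤ A.length, (A ++ U :: B).take k = A.take k :=
    fun k hk => take_append_of_le_length hk
  have hright : ∀ j, height ((A ++ U :: B).take (A.length + 1 + j)) =
      height A + 1 + height (B.take j) := by
    intro j; rw [take_append_cons_length_add]; simp; ring
  rw [IsLastMin, take_left' rfl]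
  constructor
  · rintro ⟨-, hmin, hstrict⟩
    refine ⟨fun k => ?_, fun j => ?_⟩
    · rcases le_total k A.length with hk | hk
      · have := hmin k (by simp; omega)
        rw [hleft k hk, ← height_take_add_height_drop A k] at this
        linarith
      · simp [drop_eq_nil_of_le hk]
    · have := hstrict (A.length + 1 + min j B.length) (by omega) (by simp; omega)
      rw [hright, ← take_eq_take_min] at this
      linarith
  · rintro ⟨hA, hB⟩
    have hstrict : ∀ k, A.length < k → k ≤ (A ++ U :: B).length →
        height A < height ((A ++ U :: B).take k) := by
      intro k hk _
      obtain ⟨j, rfl⟩ : ∃ j, k = A.length + 1 + j := ⟨k - A.length - 1, by omega⟩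
      rw [hright]
      linarith [hB j]
    refine ⟨by simp, fun k hk => ?_, hstrict⟩
    rcases le_or_gt k A.length with hkA | hkA
    · rw [hleft k hkA, ← height_take_add_height_drop A k]
      linarith [hA k]
    · exact (hstrict k hkA hk).le

lemma staysNonneg_append_cons_iff {A B : List DyckStep} (h0 : height A + height B + 1 = 0) :
    StaysNonneg (B ++ U :: A) ↔ EndsAtMin A ∧ StaysNonneg B := by
  have hright : ∀ j, height ((B ++ U :: A).take (B.length + 1 + j)) =
      -height (A.drop j) := by
    intro j
    rw [take_append_cons_length_add, height_append, height_cons_U]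
    linarith [height_take_add_height_drop A j]
  constructor
  · intro h
    refine ⟨fun j => ?_, fun k => ?_⟩
    · linarith [hright j, h (B.length + 1 + j)]
    · rw [take_eq_take_min, ← take_append_of_le_length (l₂ := U :: A) (min_le_right k _)]
      exact h _
  · rintro ⟨hA, hB⟩ k
    rcases le_or_gt k B.length with hk | hk
    · rw [take_append_of_le_length hk]; exact hB k
    · obtain ⟨j, rfl⟩ : ∃ j, k = B.length + 1 + j := ⟨k - B.length - 1, by omega⟩
      linarith [hright j, hA j]

def lastMinSet (n m : ℕ) : Set (List DyckStep) :=
  {w | w.length = 2 * n ∧ height w = 0 ∧ ∃ i, IsLastMin w i ∧ (w.take i).count U = m}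

def dyckSet (n : ℕ) : Set (List DyckStep) :=
  {w | w.length = 2 * n ∧ height w = 0 ∧ StaysNonneg w}

def splitSet (n m : ℕ) : Set (List DyckStep × List DyckStep) :=
  {p | (p.1 ++ U :: p.2).length = 2 * n ∧ height (p.1 ++ U :: p.2) = 0 ∧ p.1.count U = m ∧
    EndsAtMin p.1 ∧ StaysNonneg p.2}

lemma mem_lastMinSet_of_mem_splitSet {n m : ℕ} {p : List DyckStep × List DyckStep}
    (hp : p ∈ splitSet n m) : p.1 ++ U :: p.2 ∈ lastMinSet n m :=
  have ⟨hlen, h0, hc, hA, hB⟩ := hp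
  ⟨hlen, h0, p.1.length, (isLastMin_append_cons_iff _ _).2 ⟨hA, hB⟩, by rwa [take_left' rfl]⟩

lemma lastMinSet_eq_image {n m : ℕ} (hm : m < n) :
    lastMinSet n m = (fun p => p.1 ++ U :: p.2) '' splitSet n m := by
  refine Set.Subset.antisymm ?_ (Set.image_subset_iff.2 fun p => mem_lastMinSet_of_mem_splitSet)
  rintro w ⟨hlen, h0, i, hi, hc⟩
  have hcount := count_U_eq_of_height_eq_zero hlen h0
  have hilt : i < w.length := by
    refine hi.1.lt_of_ne fun hi' => ?_
    rw [hi', take_length] at hc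
    omega
  have hsplit : w = w.take i ++ U :: w.drop (i + 1) := by
    rw [← hi.getElem_eq_U hilt, ← drop_eq_getElem_cons hilt, take_append_drop]
  have hAlen : (w.take i).length = i := length_take_of_le hi.1
  have hi' : IsLastMin (w.take i ++ U :: w.drop (i + 1)) (w.take i).length := by
    rwa [hAlen, ← hsplit]
  exact ⟨(w.take i, w.drop (i + 1)), ⟨hsplit ▸ hlen, hsplit ▸ h0, hc,
    (isLastMin_append_cons_iff _ _).1 hi'⟩, hsplit.symm⟩

lemma dyckSet_eq_image {n m : ℕ} (hm : m < n) :
    dyckSet n = (fun p => p.2 ++ U :: p.1) '' splitSet n m := by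
  ext w
  constructor
  · rintro ⟨hlen, h0, hw⟩
    have hcount := count_U_eq_of_height_eq_zero hlen h0
    obtain ⟨B, A, rfl, hB⟩ := exists_eq_append_cons_count_eq (a := U) (l := w) (k := n - m - 1)
      (by omega)
    have hAB : height A + height B + 1 = 0 := by simp at h0; linarith
    refine ⟨(A, B), ⟨by simp at hlen ⊢; omega, by simp; linarith, ?_,
      (staysNonneg_append_cons_iff hAB).1 hw⟩, rfl⟩
    show A.count U = m
    simp [hB] at hcount
    omega
  · rintro ⟨⟨A, B⟩, ⟨hlen, h0, -, hA, hB⟩, rfl⟩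
    have hAB : height A + height B + 1 = 0 := by simp at h0; linarith
    exact ⟨by simp at hlen ⊢; omega, by simp; linarith,
      (staysNonneg_append_cons_iff hAB).2 ⟨hA, hB⟩⟩

lemma lastMinSet_self (n : ℕ) : lastMinSet n n = dyckSet n := by
  ext w
  constructor
  · rintro ⟨hlen, h0, i, hi, hc⟩
    have hcount := count_U_eq_of_height_eq_zero hlen h0
    have hi_eq : i = w.length := by
      refine hi.1.eq_of_not_lt fun hilt => ?_
      have hle := (take_sublist (i + 1) w).count_le U
      rw [take_add_one, getElem?_eq_getElem hilt, hi.getElem_eq_U hilt] at hle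
      simp at hle
      omega
    refine ⟨hlen, h0, fun k => ?_⟩
    have := hi.2.1 (min k w.length) (min_le_right _ _)
    rwa [hi_eq, take_length, h0, ← take_eq_take_min] at this
  · rintro ⟨hlen, h0, hw⟩
    refine ⟨hlen, h0, w.length, ⟨le_rfl, fun k _ => ?_, fun k hk hk' => absurd hk' (by omega)⟩, ?_⟩
    · rw [take_length, h0]; exact hw k
    · rw [take_length]; exact count_U_eq_of_height_eq_zero hlen h0

lemma injOn_append_cons_splitSet (n m : ℕ) :
    Set.InjOn (fun p => p.1 ++ U :: p.2) (splitSet n m) := by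
  rintro ⟨A, B⟩ ⟨-, -, hA, -⟩ ⟨A', B'⟩ ⟨-, -, hA', -⟩ h
  obtain ⟨rfl, rfl⟩ := eq_of_append_cons_eq_of_count_eq h (hA.trans hA'.symm)
  rfl

lemma injOn_append_cons_swap_splitSet (n m : ℕ) :
    Set.InjOn (fun p => p.2 ++ U :: p.1) (splitSet n m) := by
  rintro ⟨A, B⟩ ⟨hlen, h0, hA, -⟩ ⟨A', B'⟩ ⟨hlen', h0', hA', -⟩ h
  have hc := count_U_eq_of_height_eq_zero hlen h0
  have hc' := count_U_eq_of_height_eq_zero hlen' h0'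
  simp only [count_append, count_cons_self] at hc hc' hA hA'
  obtain ⟨rfl, rfl⟩ := eq_of_append_cons_eq_of_count_eq h (show B.count U = B'.count U by omega)
  rfl

lemma dyckSet_eq_image_toList (n : ℕ) :
    dyckSet n = DyckWord.toList '' {p | p.semilength = n} := by
  ext w
  constructor
  · rintro ⟨hlen, h0, hw⟩
    have hcount := count_U_eq_of_height_eq_zero hlen h0
    refine ⟨⟨w, ?_, fun k => ?_⟩, hcount, rfl⟩
    · unfold height at h0; omega
    · have := hw k; unfold height at this; omega
  · rintro ⟨p, rfl, rfl⟩
    refine ⟨p.two_mul_semilength_eq_length.symm, ?_, fun k => ?_⟩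
    · simp [height, p.count_U_eq_count_D]
    · have := p.count_D_le_count_U k; unfold height; omega

lemma ncard_dyckSet (n : ℕ) : (dyckSet n).ncard = catalan n := by
  rw [dyckSet_eq_image_toList, Set.ncard_image_of_injective _ fun _ _ => DyckWord.ext,
    ← DyckWord.card_dyckWord_semilength_eq_catalan, ← Nat.card_eq_fintype_card]
  rfl

lemma ncard_lastMinSet {n m : ℕ} (hm : m ≤ n) : (lastMinSet n m).ncard = catalan n := by
  rw [← ncard_dyckSet]
  rcases hm.lt_or_eq with hm | rfl
  · rw [lastMinSet_eq_image hm, dyckSet_eq_image hm, (injOn_append_cons_splitSet n m).ncard_image,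
      (injOn_append_cons_swap_splitSet n m).ncard_image]
  · rw [lastMinSet_self]

def stepVec : DyckStep → ℤ × ℤ
  | U => (1, 1)
  | D => (1, -1)

lemma stepVec_injective : Function.Injective stepVec := by
  rintro (_ | _) (_ | _) h <;> first | rfl | simp [stepVec] at h

lemma sum_map_snd_map_stepVec (w : List DyckStep) :
    ((w.map stepVec).map Prod.snd).sum = height w := by
  induction w with
  | nil => rfl
  | cons s w ih => rw [map_cons, map_cons, sum_cons, ih]; cases s <;> simp [stepVec] <;> ring

lemma pts_map_stepVec (w : List DyckStep) :
    pts (w.map stepVec) = (range (w.length + 1)).map fun k => height (w.take k) := by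
  refine ext_getElem (by simp [pts]) fun k h _ => ?_
  simp only [pts, getElem_scanl, ← sum_eq_foldl, ← map_take, sum_map_snd_map_stepVec,
    getElem_map, getElem_range]

lemma isRightmostMin_map_stepVec_iff (w : List DyckStep) (i : ℕ) :
    IsRightmostMin (w.map stepVec) i ↔ IsLastMin w i := by
  simp +contextual [IsRightmostMin, IsLastMin, pts_map_stepVec]

lemma count_U_take_map_stepVec (w : List DyckStep) (i : ℕ) :
    ((w.map stepVec).take i).count ((1 : ℤ), (1 : ℤ)) = (w.take i).count U := by
  rw [← map_take]
  exact count_map_of_injective _ stepVec stepVec_injective U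

lemma map_stepVec_image_lastMinSet (n m : ℕ) :
    List.map stepVec '' lastMinSet n m = {L : List (ℤ × ℤ) |
      L.length = 2 * n ∧
      (∀ s ∈ L, s = ((1 : ℤ), (1 : ℤ)) ∨ s = ((1 : ℤ), (-1 : ℤ))) ∧
      (L.map Prod.snd).sum = 0 ∧
      (∃ i, IsRightmostMin L i ∧ (L.take i).count ((1 : ℤ), (1 : ℤ)) = m)} := by
  have hrange : Set.range (List.map stepVec) =
      {L : List (ℤ × ℤ) | ∀ s ∈ L, s = ((1 : ℤ), (1 : ℤ)) ∨ s = ((1 : ℤ), (-1 : ℤ))} := by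
    rw [Set.range_list_map]
    congr! with L s
    constructor
    · rintro ⟨_ | _, rfl⟩ <;> simp [stepVec]
    · rintro (rfl | rfl)
      exacts [⟨U, rfl⟩, ⟨D, rfl⟩]
  ext L
  constructor
  · rintro ⟨w, ⟨hlen, h0, i, hi, hc⟩, rfl⟩
    exact ⟨by simpa using hlen, hrange.subset (Set.mem_range_self w),
      by rwa [sum_map_snd_map_stepVec], i, (isRightmostMin_map_stepVec_iff w i).2 hi,
      by rwa [count_U_take_map_stepVec]⟩
  · rintro ⟨hlen, hsteps, h0, i, hi, hc⟩
    obtain ⟨w, rfl⟩ : L ∈ Set.range (List.map stepVec) := hrange.symm.subset hsteps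
    exact ⟨w, ⟨by simpa using hlen, by rwa [← sum_map_snd_map_stepVec], i,
      (isRightmostMin_map_stepVec_iff w i).1 hi, by rwa [← count_U_take_map_stepVec]⟩, rfl⟩

end ChungFeller

/-- Chung-Feller theorem of Motzkin type for Dyck steps: for `0 ≤ m ≤ n`, the number
of lattice paths of `2n` steps from `{(1,1),(1,-1)}` from `(0,0)` to `(2n,0)` having
exactly `m` up-steps among the steps weakly to the left of the rightmost minimum
point, equals the `n`-th Catalan number `(2n choose n)/(n+1)`. -/
theorem chung_feller_motzkin_type_dyck_steps (n m : ℕ) (hm : m ≤ n) :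
    Nat.card {L : List (ℤ × ℤ) //
      L.length = 2 * n ∧
      (∀ s ∈ L, s = ((1 : ℤ), (1 : ℤ)) ∨ s = ((1 : ℤ), (-1 : ℤ))) ∧
      (L.map Prod.snd).sum = 0 ∧
      (∃ i, IsRightmostMin L i ∧ (L.take i).count ((1 : ℤ), (1 : ℤ)) = m)} =
    (2 * n).choose n / (n + 1) := by
  rw [← Nat.centralBinom_eq_two_mul_choose, ← catalan_eq_centralBinom_div,
    ← ChungFeller.ncard_lastMinSet hm,
    ← Set.ncard_image_of_injective _ (List.map_injective_iff.2 ChungFeller.stepVec_injective),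
    ChungFeller.map_stepVec_image_lastMinSet]
  rfl
end

section
/- Let F(z) be a formal power series with constant term 1 satisfying F(z) = 1 + B(z)·F(z) + A(z)·F(z)^2, where A(z) = Σ_{i∈A} a_i z^i and B(z) = Σ_{i∈B} b_i z^i are polynomials with zero constant term. Define G(y,z) = 1/(1 − B(yz) − A(yz)·F(yz) − (A(yz)/y)·F(z)) and P(y,z) = 1 + Σ_{i∈B} b_i z^i (y^i−1)/(y−1) · F(z) + Σ_{i∈A} a_i z^i (y^{i-1}−1)/(y−1) · F(z)^2. Then G(y,z)·P(y,z) = (y·F(yz) − F(z))/(y − 1). -/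
/-!
Multiply both sides by `y - 1`. On the right, `(y - 1) · Σ f_n z^n (1 + ⋯ + y^n)` telescopes to
`y F(yz) - F(z)`; on the left, `(y - 1) P` is expressed through `B(yz) - B(z)` and
`A(yz)/y - A(z)`. The identity `(1/G) · (y F(yz) - F(z)) = (y - 1) P` then follows by subtracting
the quadratic equation for `F(z)` from `y` times the one for `F(yz)` (obtained by rescaling
`z ↦ yz`). Since `y - 1` is monic, it is a non-zero-divisor and can be cancelled.
-/

open PowerSeries Finset

/-- With `f = F(z)`, `f' = F(yz)`, `b' = B(yz)`, `a' = A(yz)`, `a'' = A(yz)/y`, and `qb`, `qa` the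
divided differences `(B(yz) - B(z))/(y - 1)`, `(A(yz)/y - A(z))/(y - 1)`. -/
theorem chungFeller_identity {T : Type*} [CommRing T] {y f f' b b' a a' a'' qb qa : T}
    (hf : f = 1 + b * f + a * f ^ 2) (hf' : f' = 1 + b' * f' + a' * f' ^ 2) (ha : a' = y * a'')
    (hqb : (y - 1) * qb = b' - b) (hqa : (y - 1) * qa = a'' - a) :
    (1 - b' - a' * f' - a'' * f) * (y * f' - f) = (y - 1) * (1 + qb * f + qa * f ^ 2) := by
  linear_combination y * hf' - hf + f' * f * ha - f * hqb - f ^ 2 * hqa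

namespace PowerSeries

variable {S : Type*} [CommRing S]

theorem isLeftRegular_C {c : S} (hc : IsLeftRegular c) : IsLeftRegular (C c : S⟦X⟧) := by
  intro f g h
  ext n
  have hn := congrArg (coeff n) h
  simp only [coeff_C_mul] at hn
  exact hc hn

theorem rescale_C (y c : S) : rescale y (C c) = C c := by
  ext n
  rcases n with _ | n <;> simp [coeff_C]

theorem rescale_sum_C_mul_X_pow (y : S) (s : Finset ℕ) (c : ℕ → S) :
    rescale y (∑ i ∈ s, C (c i) * X ^ i) = ∑ i ∈ s, C (c i * y ^ i) * X ^ i := by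
  simp only [map_sum, map_mul, map_pow, rescale_C, rescale_X, mul_pow, ← mul_assoc]

theorem sum_C_mul_pow_mul_X_pow {s : Finset ℕ} (hs : ∀ i ∈ s, 0 < i) (y : S) (c : ℕ → S) :
    ∑ i ∈ s, C (c i * y ^ i) * X ^ i = C y * ∑ i ∈ s, C (c i * y ^ (i - 1)) * X ^ i := by
  rw [mul_sum]
  refine sum_congr rfl fun i hi => ?_
  rw [← mul_assoc, ← map_mul, mul_left_comm, ← pow_succ', Nat.sub_add_cancel (hs i hi)]

theorem C_sub_one_mul_sum_geom_sum (y : S) (s : Finset ℕ) (c : ℕ → S) (e : ℕ → ℕ) :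
    (C y - 1) * ∑ i ∈ s, C (c i * ∑ j ∈ range (e i), y ^ j) * X ^ i =
      ∑ i ∈ s, C (c i * y ^ e i) * X ^ i - ∑ i ∈ s, C (c i) * X ^ i := by
  rw [← map_one C, ← map_sub, mul_sum, ← sum_sub_distrib]
  refine sum_congr rfl fun i _ => ?_
  rw [← mul_assoc, ← map_mul, ← sub_mul, ← map_sub, mul_left_comm, mul_geom_sum, mul_sub,
    mul_one]

theorem C_sub_one_mul_mk_geom_sum (y : S) (f : S⟦X⟧) :
    (C y - 1) * mk (fun n => coeff n f * ∑ j ∈ range (n + 1), y ^ j) =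
      C y * rescale y f - f := by
  ext n
  rw [← map_one C, ← map_sub, coeff_C_mul, coeff_mk, map_sub, coeff_C_mul, coeff_rescale]
  linear_combination coeff n f * mul_geom_sum y (n + 1)

theorem mul_eq_mk_geom_sum_of_quadratic (y : S) (hy : IsLeftRegular (y - 1))
    {s t : Finset ℕ} (hs : ∀ i ∈ s, 0 < i) (a b : ℕ → S) (F G : S⟦X⟧)
    (hF : F = 1 + (∑ i ∈ t, C (b i) * X ^ i) * F + (∑ i ∈ s, C (a i) * X ^ i) * F ^ 2)
    (hG : G * (1 - ∑ i ∈ t, C (b i * y ^ i) * X ^ i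
        - (∑ i ∈ s, C (a i * y ^ i) * X ^ i) * rescale y F
        - (∑ i ∈ s, C (a i * y ^ (i - 1)) * X ^ i) * F) = 1) :
    G * (1 + (∑ i ∈ t, C (b i * ∑ j ∈ range i, y ^ j) * X ^ i) * F
        + (∑ i ∈ s, C (a i * ∑ j ∈ range (i - 1), y ^ j) * X ^ i) * F ^ 2) =
      mk fun n => coeff n F * ∑ j ∈ range (n + 1), y ^ j := by
  have hFy : rescale y F = 1 + (∑ i ∈ t, C (b i * y ^ i) * X ^ i) * rescale y F
      + (∑ i ∈ s, C (a i * y ^ i) * X ^ i) * rescale y F ^ 2 := by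
    conv_lhs => rw [hF]
    simp only [map_add, map_mul, map_pow, map_one, rescale_sum_C_mul_X_pow]
  apply isLeftRegular_C hy
  show C (y - 1) * _ = C (y - 1) * _
  rw [map_sub, map_one]
  calc (C y - 1) * (G * _)
      = G * ((1 - ∑ i ∈ t, C (b i * y ^ i) * X ^ i
        - (∑ i ∈ s, C (a i * y ^ i) * X ^ i) * rescale y F
        - (∑ i ∈ s, C (a i * y ^ (i - 1)) * X ^ i) * F) * (C y * rescale y F - F)) := by
        rw [chungFeller_identity hF hFy (sum_C_mul_pow_mul_X_pow hs y a)
          (C_sub_one_mul_sum_geom_sum y t b fun i => i) (C_sub_one_mul_sum_geom_sum y s a (· - 1))]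
        ring
    _ = (C y - 1) * mk fun n => coeff n F * ∑ j ∈ range (n + 1), y ^ j := by
        rw [← mul_assoc, hG, one_mul, C_sub_one_mul_mk_geom_sum]

end PowerSeries

theorem dyck_type_algebraic_core_general {R : Type*} [CommRing R] (A B : Finset ℕ)
    (hA : ∀ i ∈ A, 0 < i) (a b : ℕ → R)
    (F : PowerSeries R)
    (hF : F = 1 + (∑ i ∈ B, PowerSeries.C (R := R) (b i) * PowerSeries.X ^ i) * F +
               (∑ i ∈ A, PowerSeries.C (R := R) (a i) * PowerSeries.X ^ i) * F ^ 2)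
    (G : PowerSeries (Polynomial R))
    (hG : G * (1 - (∑ i ∈ B, PowerSeries.C (R := Polynomial R)
                      (Polynomial.C (b i) * Polynomial.X ^ i) * PowerSeries.X ^ i)
                 - (∑ i ∈ A, PowerSeries.C (R := Polynomial R)
                      (Polynomial.C (a i) * Polynomial.X ^ i) * PowerSeries.X ^ i) *
                     (PowerSeries.mk fun n =>
                       Polynomial.C (PowerSeries.coeff (R := R) n F) * Polynomial.X ^ n)
                 - (∑ i ∈ A, PowerSeries.C (R := Polynomial R)
                      (Polynomial.C (a i) * Polynomial.X ^ (i - 1)) * PowerSeries.X ^ i) *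
                     (PowerSeries.mk fun n =>
                       Polynomial.C (PowerSeries.coeff (R := R) n F))) = 1) :
    G * (1 + (∑ i ∈ B, PowerSeries.C (R := Polynomial R)
                (Polynomial.C (b i) * ∑ j ∈ Finset.range i, Polynomial.X ^ j) *
                PowerSeries.X ^ i) *
              (PowerSeries.mk fun n => Polynomial.C (PowerSeries.coeff (R := R) n F)) +
            (∑ i ∈ A, PowerSeries.C (R := Polynomial R)
                (Polynomial.C (a i) * ∑ j ∈ Finset.range (i - 1), Polynomial.X ^ j) *
                PowerSeries.X ^ i) *
              (PowerSeries.mk fun n => Polynomial.C (PowerSeries.coeff (R := R) n F)) ^ 2) =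
    PowerSeries.mk fun n =>
      Polynomial.C (PowerSeries.coeff (R := R) n F) * ∑ j ∈ Finset.range (n + 1), Polynomial.X ^ j := by
  have hFz :
      (PowerSeries.mk fun n => Polynomial.C (coeff n F)) = PowerSeries.map Polynomial.C F := by
    ext n
    rw [coeff_mk, coeff_map]
  have hFyz : (PowerSeries.mk fun n => Polynomial.C (coeff n F) * Polynomial.X ^ n) =
      rescale Polynomial.X (PowerSeries.map Polynomial.C F) := by
    ext n
    rw [coeff_mk, coeff_rescale, coeff_map, mul_comm]
  have hFmap := congrArg (PowerSeries.map Polynomial.C) hF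
  simp only [map_add, map_mul, map_pow, map_one, map_sum, map_C, map_X] at hFmap
  rw [hFz, hFyz] at hG
  rw [hFz, mul_eq_mk_geom_sum_of_quadratic Polynomial.X (Polynomial.monic_X_sub_C 1).isRegular.left
    hA (fun i => Polynomial.C (a i)) (fun i => Polynomial.C (b i)) _ G hFmap hG]
  ext n
  rw [coeff_mk, coeff_mk, coeff_map]

/-- The algebraic core of the Dyck-type Chung-Feller theorem (Class 1).
Let `F` be a power series with constant term 1 satisfying `F = 1 + B(z)F + A(z)F²`,
with `A(z) = Σ_{i∈A} a_i z^i`, `B(z) = Σ_{i∈B} b_i z^i` (zero constant term, i.e. all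
indices positive). Let `G` be the reciprocal of
`1 − B(yz) − A(yz)·F(yz) − (A(yz)/y)·F(z)` and
`P = 1 + Σ_{i∈B} b_i z^i (1+⋯+y^{i-1})·F(z) + Σ_{i∈A} a_i z^i (1+⋯+y^{i-2})·F(z)²`.
Then `G·P = (y·F(yz) − F(z))/(y−1) = Σ_n f_n z^n (1+y+⋯+y^n)`. -/
theorem dyck_type_algebraic_core {R : Type*} [CommRing R] (A B : Finset ℕ)
    (hA : ∀ i ∈ A, 0 < i) (hB : ∀ i ∈ B, 0 < i) (a b : ℕ → R)
    (F : PowerSeries R) (hF0 : PowerSeries.constantCoeff (R := R) F = 1)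
    (hF : F = 1 + (∑ i ∈ B, PowerSeries.C (R := R) (b i) * PowerSeries.X ^ i) * F +
               (∑ i ∈ A, PowerSeries.C (R := R) (a i) * PowerSeries.X ^ i) * F ^ 2)
    (G : PowerSeries (Polynomial R))
    (hG : G * (1 - (∑ i ∈ B, PowerSeries.C (R := Polynomial R)
                      (Polynomial.C (b i) * Polynomial.X ^ i) * PowerSeries.X ^ i)
                 - (∑ i ∈ A, PowerSeries.C (R := Polynomial R)
                      (Polynomial.C (a i) * Polynomial.X ^ i) * PowerSeries.X ^ i) *
                     (PowerSeries.mk fun n =>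
                       Polynomial.C (PowerSeries.coeff (R := R) n F) * Polynomial.X ^ n)
                 - (∑ i ∈ A, PowerSeries.C (R := Polynomial R)
                      (Polynomial.C (a i) * Polynomial.X ^ (i - 1)) * PowerSeries.X ^ i) *
                     (PowerSeries.mk fun n =>
                       Polynomial.C (PowerSeries.coeff (R := R) n F))) = 1) :
    G * (1 + (∑ i ∈ B, PowerSeries.C (R := Polynomial R)
                (Polynomial.C (b i) * ∑ j ∈ Finset.range i, Polynomial.X ^ j) *
                PowerSeries.X ^ i) *
              (PowerSeries.mk fun n => Polynomial.C (PowerSeries.coeff (R := R) n F)) +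
            (∑ i ∈ A, PowerSeries.C (R := Polynomial R)
                (Polynomial.C (a i) * ∑ j ∈ Finset.range (i - 1), Polynomial.X ^ j) *
                PowerSeries.X ^ i) *
              (PowerSeries.mk fun n => Polynomial.C (PowerSeries.coeff (R := R) n F)) ^ 2) =
    PowerSeries.mk fun n =>
      Polynomial.C (PowerSeries.coeff (R := R) n F) * ∑ j ∈ Finset.range (n + 1), Polynomial.X ^ j :=
  dyck_type_algebraic_core_general A B hA a b F hF G hG
end

section
/- For Class 1 paths (steps (1,1) weight 1 length 1; (2i,0) weight b_i length i for i∈B; (2i-1,-1) weight a_i length i-1 for i∈A): for all 0 ≤ m ≤ n, the total weight of pointed paths from (0,0) to the line y=1 with total length n+1, non-positive pointed length m, and last step of length ≥ 1, equals the total weight f_n of nonnegative paths of length n ending on the x-axis. -/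
/-- Abstract steps: `up` is `(1,1)`, `flat i` is `(2i,0)` and `down i` is `(2i-1,-1)`. -/
inductive Step where
  | up : Step
  | flat : ℕ → Step
  | down : ℕ → Step

/-- Height change of a step. -/
def dh : Step → ℤ
  | .up => 1
  | .flat _ => 0
  | .down _ => -1

/-- Length of a step (Class 1). -/
def len : Step → ℕ
  | .up => 1
  | .flat i => i
  | .down i => i - 1

/-- A step is allowed: flat steps are indexed by `B`, down steps by `A`. -/
def Valid (A B : Finset ℕ) : Step → Prop
  | .up => True
  | .flat i => i ∈ B
  | .down i => i ∈ A

/-- Weight of a step. -/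
def wt {R : Type*} [CommRing R] (a b : ℕ → R) : Step → R
  | .up => 1
  | .flat i => b i
  | .down i => a i

/-- Weight of a path. -/
def pathWt {R : Type*} [CommRing R] (a b : ℕ → R) (L : List Step) : R :=
  (L.map (wt a b)).prod

/-- Length of a path. -/
def pathLen (L : List Step) : ℕ := (L.map len).sum

/-- A nonnegative path: ends on the x-axis and never goes below it. -/
def Nonneg (L : List Step) : Prop :=
  (L.map dh).sum = 0 ∧ ∀ h ∈ (L.map dh).scanl (· + ·) 0, 0 ≤ h

/-- The non-positive length `\bar l(L)`: the sum of the lengths of the steps of `L`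
whose ending height is `≤ 0`. -/
def npLen (L : List Step) : ℕ :=
  (((L.zip (((L.map dh).scanl (· + ·) 0).tail)).filter
    (fun p => decide (p.2 ≤ 0))).map (fun p => len p.1)).sum

/-!
Cycle lemma: if `w` has height `1`, rotating it to start right after the up step that leaves
the last minimum of its height profile gives `P ++ [up]` with `P` nonnegative, and no other
rotation of `w` has this form. So `(w, j) ↦ P` maps pointed paths to nonnegative paths,
preserving weight, and it is a bijection because the statistic `npLen + j` separates the
`pathLen w = n + 1` pointed rotations of `P ++ [up]`: exchanging the blocks of `X ++ Y`
lowers or raises the starting height of every step, and moves the step at the cut between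
height `1`, where it is not counted, and height `≤ 0`, where its whole length is counted,
which outweighs any change of the mark.
-/

open List

def pathHeight (L : List Step) : ℤ := (L.map dh).sum

@[simp] lemma pathHeight_nil : pathHeight [] = 0 := rfl

@[simp] lemma pathHeight_cons (s : Step) (L : List Step) :
    pathHeight (s :: L) = dh s + pathHeight L := by
  simp [pathHeight]

@[simp] lemma pathHeight_append (L L' : List Step) :
    pathHeight (L ++ L') = pathHeight L + pathHeight L' := by
  simp [pathHeight]

@[simp] lemma pathLen_append (L L' : List Step) : pathLen (L ++ L') = pathLen L + pathLen L' := by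
  simp [pathLen]

@[simp] lemma pathLen_singleton (s : Step) : pathLen [s] = len s := by simp [pathLen]

lemma List.Perm.pathHeight_eq {L L' : List Step} (h : L ~ L') : pathHeight L = pathHeight L' :=
  (h.map dh).sum_eq

lemma List.Perm.pathLen_eq {L L' : List Step} (h : L ~ L') : pathLen L = pathLen L' :=
  (h.map len).sum_eq

lemma List.Perm.pathWt_eq {R : Type*} [CommRing R] (a b : ℕ → R) {L L' : List Step}
    (h : L ~ L') : pathWt a b L = pathWt a b L' :=
  (h.map (wt a b)).prod_eq

lemma pathWt_append_up {R : Type*} [CommRing R] (a b : ℕ → R) (L : List Step) :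
    pathWt a b (L ++ [Step.up]) = pathWt a b L := by
  simp [pathWt, wt]

lemma eq_up_of_one_le_dh {s : Step} (h : 1 ≤ dh s) : s = Step.up := by
  cases s <;> simp_all [dh]

lemma scanl_dh_eq_map_inits (L : List Step) (c : ℤ) :
    (L.map dh).scanl (· + ·) c = L.inits.map (fun Q => c + pathHeight Q) := by
  induction L generalizing c with
  | nil => simp
  | cons s L ih => simp [ih, add_assoc]

lemma nonneg_iff_prefix {L : List Step} :
    Nonneg L ↔ pathHeight L = 0 ∧ ∀ Q, Q <+: L → 0 ≤ pathHeight Q := by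
  simp [Nonneg, scanl_dh_eq_map_inits, mem_inits, pathHeight]

lemma prefix_append_cases {U V Q : List Step} (h : Q <+: U ++ V) :
    Q <+: U ∨ ∃ R, R <+: V ∧ Q = U ++ R := by
  rcases prefix_or_prefix_of_prefix h (prefix_append U V) with hQU | ⟨R, rfl⟩
  · exact Or.inl hQU
  · exact Or.inr ⟨R, (prefix_append_right_inj U).1 h, rfl⟩

/-- `npLen` of a path started at height `c`. -/
def npLenFrom : ℤ → List Step → ℕ
  | _, [] => 0
  | c, s :: L => (if c + dh s ≤ 0 then len s else 0) + npLenFrom (c + dh s) L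

@[simp] lemma npLenFrom_nil (c : ℤ) : npLenFrom c [] = 0 := rfl

@[simp] lemma npLenFrom_cons (c : ℤ) (s : Step) (L : List Step) :
    npLenFrom c (s :: L) = (if c + dh s ≤ 0 then len s else 0) + npLenFrom (c + dh s) L := rfl

lemma npLen_eq_npLenFrom (L : List Step) : npLen L = npLenFrom 0 L := by
  suffices ∀ c, (((L.zip (((L.map dh).scanl (· + ·) c)).tail).filter
      (fun p => decide (p.2 ≤ 0))).map (fun p => len p.1)).sum = npLenFrom c L from this 0
  induction L with
  | nil => simp
  | cons s L ih =>
    intro c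
    cases L <;> by_cases h : c + dh s ≤ 0 <;> simp_all

lemma npLenFrom_append (c : ℤ) (L L' : List Step) :
    npLenFrom c (L ++ L') = npLenFrom c L + npLenFrom (c + pathHeight L) L' := by
  induction L generalizing c with
  | nil => simp
  | cons s L ih => simp [ih, add_assoc]

lemma npLenFrom_concat (c : ℤ) (L : List Step) (t : Step) :
    npLenFrom c (L ++ [t]) =
      npLenFrom c L + if c + pathHeight (L ++ [t]) ≤ 0 then len t else 0 := by
  simp [npLenFrom_append, add_assoc]

lemma npLenFrom_antitone (L : List Step) {c c' : ℤ} (h : c ≤ c') :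
    npLenFrom c' L ≤ npLenFrom c L := by
  induction L generalizing c c' with
  | nil => simp
  | cons s L ih =>
    have := ih (show c + dh s ≤ c' + dh s by linarith)
    simp only [npLenFrom_cons]
    split_ifs <;> omega

lemma npLenFrom_le_pathLen (c : ℤ) (L : List Step) : npLenFrom c L ≤ pathLen L := by
  induction L generalizing c with
  | nil => simp
  | cons s L ih =>
    have := ih (c + dh s)
    simp only [npLenFrom_cons, pathLen, map_cons, sum_cons] at this ⊢
    split_ifs <;> omega

lemma npLen_add_lt_pathLen {u : List Step} (hu : pathHeight u = 1) {t : Step}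
    (ht : u.getLast? = some t) {j : ℕ} (hj : j < len t) : npLen u + j < pathLen u := by
  obtain ⟨X, rfl⟩ := getLast?_eq_some_iff.1 ht
  have := npLenFrom_le_pathLen 0 X
  rw [npLen_eq_npLenFrom, npLenFrom_concat, zero_add, hu, if_neg one_pos.not_ge]
  simp only [pathLen_append, pathLen_singleton]
  omega

lemma npLen_append_add_len_le {X Y : List Step} (h : pathHeight X + pathHeight Y = 1)
    (hY : pathHeight Y ≤ 0) {s : Step} (hs : Y.getLast? = some s) :
    npLen (X ++ Y) + len s ≤ npLen (Y ++ X) := by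
  obtain ⟨Y, rfl⟩ := getLast?_eq_some_iff.1 hs
  have hXY := npLenFrom_antitone Y (show (0 : ℤ) ≤ pathHeight X by linarith)
  have hYX := npLenFrom_antitone X hY
  have hXY' : npLen (X ++ (Y ++ [s])) = npLenFrom 0 X + npLenFrom (pathHeight X) Y := by
    rw [npLen_eq_npLenFrom, npLenFrom_append, npLenFrom_concat, zero_add, h,
      if_neg one_pos.not_ge, add_zero]
  have hYX' : npLen (Y ++ [s] ++ X) =
      npLenFrom 0 Y + len s + npLenFrom (pathHeight (Y ++ [s])) X := by
    rw [npLen_eq_npLenFrom, npLenFrom_append, npLenFrom_concat, zero_add, if_pos hY]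
  omega

lemma npLen_append_add_ne {X Y : List Step} (h : pathHeight X + pathHeight Y = 1)
    {s t : Step} (ht : X.getLast? = some t) (hs : Y.getLast? = some s) {i j : ℕ}
    (hi : i < len s) (hj : j < len t) : npLen (X ++ Y) + i ≠ npLen (Y ++ X) + j := by
  rcases le_or_gt (pathHeight Y) 0 with hY | hY
  · have := npLen_append_add_len_le h hY hs
    omega
  · have := npLen_append_add_len_le (by linarith) (show pathHeight X ≤ 0 by linarith) ht
    omega

lemma npLen_add_ne_rotate {u : List Step} (hu : pathHeight u = 1) {c : ℕ} (hc : 0 < c)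
    (hcu : c < u.length) {s t : Step} (hs : u.getLast? = some s)
    (ht : (u.rotate c).getLast? = some t) {i j : ℕ} (hi : i < len s) (hj : j < len t) :
    npLen u + i ≠ npLen (u.rotate c) + j := by
  have hX : take c u ≠ [] := ne_nil_of_length_pos (by rw [length_take]; omega)
  have hY : drop c u ≠ [] := ne_nil_of_length_pos (by rw [length_drop]; omega)
  rw [rotate_eq_drop_append_take hcu.le, getLast?_append_of_ne_nil _ hX] at ht
  rw [← take_append_drop c u, getLast?_append_of_ne_nil _ hY] at hs
  rw [← take_append_drop c u, pathHeight_append] at hu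
  rw [rotate_eq_drop_append_take hcu.le]
  nth_rw 1 [← take_append_drop c u]
  exact npLen_append_add_ne hu ht hs hi hj

lemma eq_of_isRotated_of_npLen_add_eq {u v : List Step} (huv : u ~r v) (hu : pathHeight u = 1)
    {s t : Step} (hs : u.getLast? = some s) (ht : v.getLast? = some t) {i j : ℕ}
    (hi : i < len s) (hj : j < len t) (h : npLen u + i = npLen v + j) : u = v ∧ i = j := by
  obtain ⟨n, rfl⟩ := huv
  have hu0 : 0 < u.length := length_pos_of_ne_nil (by rintro rfl; simp at hs)
  rw [← rotate_mod] at ht h ⊢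
  rcases Nat.eq_zero_or_pos (n % u.length) with hn | hn
  · rw [hn, rotate_zero] at h ⊢
    exact ⟨rfl, by omega⟩
  · exact absurd h (npLen_add_ne_rotate hu hn (Nat.mod_lt _ hu0) hs ht hi hj)

lemma getLast?_rotate_succ {w : List Step} {k : ℕ} (hk : k < w.length) :
    (w.rotate (k + 1)).getLast? = some w[k] := by
  rw [rotate_eq_drop_append_take hk, take_add_one, getElem?_eq_getElem hk, Option.toList_some,
    ← append_assoc, getLast?_concat]

lemma exists_rotate_npLen_add_eq {w : List Step} (hw : pathHeight w = 1) {m : ℕ}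
    (hm : m < pathLen w) :
    ∃ (k : ℕ) (hk : k < w.length), ∃ j < len w[k], npLen (w.rotate (k + 1)) + j = m := by
  have hrot (k : Fin w.length) : pathHeight (w.rotate (k + 1)) = 1 := by
    rw [(rotate_perm w _).pathHeight_eq, hw]
  have hne {k k' : Fin w.length} (hkk' : k < k') {j j' : ℕ} (hj : j < len w[(k : ℕ)])
      (hj' : j' < len w[(k' : ℕ)]) :
      npLen (w.rotate (k + 1)) + j ≠ npLen (w.rotate (k' + 1)) + j' := by
    have hrr : w.rotate (k' + 1) = (w.rotate (k + 1)).rotate (k' - k) := by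
      rw [rotate_rotate]; congr 1; omega
    rw [hrr]
    refine npLen_add_ne_rotate (hrot k) (by omega) (by rw [length_rotate]; omega)
      (getLast?_rotate_succ k.2) ?_ hj hj'
    rw [← hrr, getLast?_rotate_succ k'.2]
  obtain ⟨⟨k, j⟩, hkj, hm'⟩ := Finset.surj_on_of_inj_on_of_card_le
    (s := Finset.univ.sigma fun k : Fin w.length => Finset.range (len w[(k : ℕ)]))
    (t := Finset.range (pathLen w))
    (fun p _ => npLen (w.rotate (p.1 + 1)) + p.2)
    (fun p hp => by
      simp only [Finset.mem_sigma, Finset.mem_range] at hp ⊢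
      rw [← (rotate_perm w _).pathLen_eq]
      exact npLen_add_lt_pathLen (hrot p.1) (getLast?_rotate_succ p.1.2) hp.2)
    (fun ⟨k, j⟩ ⟨k', j'⟩ hp hp' h => by
      simp only [Finset.mem_sigma, Finset.mem_range] at hp hp' h
      rcases lt_trichotomy k k' with hkk' | rfl | hkk'
      · exact absurd h (hne hkk' hp.2 hp'.2)
      · rw [add_left_cancel_iff.1 h]
      · exact absurd h.symm (hne hkk' hp'.2 hp.2))
    (by simp [Finset.card_sigma, pathLen])
    m (Finset.mem_range.2 hm)
  simp only [Finset.mem_sigma, Finset.mem_range] at hkj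
  exact ⟨k, k.2, j, hkj.2, hm'.symm⟩

lemma exists_last_min_prefix (w : List Step) :
    ∃ A, A <+: w ∧ ∀ Q, Q <+: w →
      pathHeight A < pathHeight Q ∨ pathHeight Q = pathHeight A ∧ Q.length ≤ A.length := by
  classical
  obtain ⟨A, hA, hmax⟩ := w.inits.toFinset.exists_max_image
    (fun Q => toLex (-pathHeight Q, Q.length)) ⟨[], by simp⟩
  refine ⟨A, by simpa using hA, fun Q hQ => ?_⟩
  have := hmax Q (by simpa using hQ)
  rw [Prod.Lex.le_iff] at this
  simp only [ofLex_toLex, neg_lt_neg_iff, neg_inj] at this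
  exact this

lemma exists_nonneg_append_up_isRotated {w : List Step} (hw : pathHeight w = 1) :
    ∃ P, Nonneg P ∧ P ++ [Step.up] ~r w := by
  obtain ⟨A, ⟨B, rfl⟩, hA⟩ := exists_last_min_prefix w
  have hAmin (Q : List Step) (hQ : Q <+: A ++ B) : pathHeight A ≤ pathHeight Q := by
    rcases hA Q hQ with h | h <;> omega
  have hAlast (C : List Step) (hC : C ≠ []) (hQ : A ++ C <+: A ++ B) :
      pathHeight A < pathHeight (A ++ C) := by
    have := length_pos_of_ne_nil hC
    rcases hA _ hQ with h | h
    · exact h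
    · rw [length_append] at h
      omega
  obtain _ | ⟨b, B⟩ := B
  · have := hAmin [] (by simp)
    simp_all
  have hb : b = Step.up := by
    have := hAlast [b] (by simp) (by simp)
    simp only [pathHeight_append, pathHeight_cons, pathHeight_nil] at this
    exact eq_up_of_one_le_dh (by omega)
  subst hb
  refine ⟨B ++ A, nonneg_iff_prefix.2 ⟨?_, ?_⟩, ?_⟩
  · simp only [pathHeight_append, pathHeight_cons, dh] at hw ⊢
    linarith
  · intro Q hQ
    rcases prefix_append_cases hQ with hQB | ⟨R, hR, rfl⟩
    · have := hAlast (Step.up :: Q) (by simp) (by simpa using hQB)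
      simp only [pathHeight_append, pathHeight_cons, dh] at this
      omega
    · have := hAmin R (hR.trans (prefix_append _ _))
      simp only [pathHeight_append, pathHeight_cons, dh] at hw ⊢
      linarith
  · simpa using (isRotated_append (l := B) (l' := A ++ [Step.up]))

/-- A nontrivial rotation of `P ++ [up]` reads `drop c P ++ [up] ++ X ++ [x]` with
`X ++ [x] = take c P`; both `X` and `drop c P` are prefixes of nonnegative paths, so `P'` would
have height `≥ 1`. -/
lemma eq_of_nonneg_append_up_isRotated {P P' : List Step} (hP : Nonneg P) (hP' : Nonneg P')
    (h : P ++ [Step.up] ~r P' ++ [Step.up]) : P = P' := by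
  obtain ⟨n, hn⟩ := h
  rw [← rotate_mod, length_append, length_singleton] at hn
  set c := n % (P.length + 1) with hc
  have hcP : c ≤ P.length := Nat.lt_succ_iff.1 (Nat.mod_lt _ P.length.succ_pos)
  rcases Nat.eq_zero_or_pos c with hc0 | hc0
  · rw [hc0, rotate_zero] at hn
    exact append_cancel_right hn
  rw [rotate_eq_drop_append_take (by rw [length_append, length_singleton]; omega), drop_append_of_le_length hcP,
    take_append_of_le_length hcP] at hn
  obtain ⟨X, x, hX⟩ : ∃ X x, take c P = X ++ [x] :=
    (eq_nil_or_concat' _).resolve_left (ne_nil_of_length_pos (by rw [length_take]; omega))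
  have hP'eq : P' = drop c P ++ [Step.up] ++ X := by
    have := congrArg dropLast hn
    rwa [hX, ← append_assoc, dropLast_concat, dropLast_concat, eq_comm] at this
  have hXnn := (nonneg_iff_prefix.1 hP).2 X ((prefix_append X [x]).trans (hX ▸ take_prefix c P))
  have hDnn := (nonneg_iff_prefix.1 hP').2 (drop c P) (hP'eq ▸ by simp [append_assoc])
  have h0 := (nonneg_iff_prefix.1 hP').1
  rw [hP'eq] at h0
  simp only [append_assoc, singleton_append, pathHeight_append, pathHeight_cons, dh] at h0
  omega

/-- By the cycle lemma, when `w` has height `1` this is the unique nonnegative `P` with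
`P ++ [up]` a rotation of `w`. -/
noncomputable def nonnegRot (w : List Step) : List Step :=
  Classical.epsilon fun P => Nonneg P ∧ P ++ [Step.up] ~r w

lemma nonnegRot_spec {w : List Step} (hw : pathHeight w = 1) :
    Nonneg (nonnegRot w) ∧ nonnegRot w ++ [Step.up] ~r w :=
  Classical.epsilon_spec (exists_nonneg_append_up_isRotated hw)

lemma nonnegRot_eq {w P : List Step} (hP : Nonneg P) (h : P ++ [Step.up] ~r w) :
    nonnegRot w = P := by
  have hw : pathHeight w = 1 := by
    rw [← h.perm.pathHeight_eq, pathHeight_append, (nonneg_iff_prefix.1 hP).1]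
    rfl
  have hspec := nonnegRot_spec hw
  exact eq_of_nonneg_append_up_isRotated hspec.1 hP (hspec.2.trans h.symm)

def pointedPaths (A B : Finset ℕ) (n m : ℕ) : Set (List Step × ℕ) :=
  {p | (∀ s ∈ p.1, Valid A B s) ∧ pathHeight p.1 = 1 ∧ pathLen p.1 = n + 1 ∧
    (∃ s, p.1.getLast? = some s ∧ 1 ≤ len s ∧ p.2 < len s) ∧ npLen p.1 + p.2 = m}

def nonnegPaths (A B : Finset ℕ) (n : ℕ) : Set (List Step) :=
  {L | (∀ s ∈ L, Valid A B s) ∧ Nonneg L ∧ pathLen L = n}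

section Bijection

variable {A B : Finset ℕ} {n m : ℕ}

lemma mapsTo_nonnegRot :
    Set.MapsTo (fun p => nonnegRot p.1) (pointedPaths A B n m) (nonnegPaths A B n) := by
  rintro ⟨w, j⟩ ⟨hval, hw, hlen : pathLen w = n + 1, -, -⟩
  obtain ⟨hnn, hrot⟩ := nonnegRot_spec hw
  refine ⟨fun s hs => hval s (hrot.mem_iff.1 (mem_append_left _ hs)), hnn, ?_⟩
  show pathLen (nonnegRot w) = n
  have := hrot.perm.pathLen_eq
  simp only [pathLen_append, pathLen_singleton, len] at this
  omega

lemma injOn_nonnegRot : Set.InjOn (fun p => nonnegRot p.1) (pointedPaths A B n m) := by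
  rintro ⟨u, i⟩ ⟨-, hu, -, ⟨s, hs, -, hi⟩, hui⟩ ⟨v, j⟩ ⟨-, hv, -, ⟨t, ht, -, hj⟩, hvj⟩ huv
  have hrot : u ~r v := by
    refine (nonnegRot_spec hu).2.symm.trans ?_
    simpa only [huv] using (nonnegRot_spec hv).2
  obtain ⟨rfl, rfl⟩ := eq_of_isRotated_of_npLen_add_eq hrot hu hs ht hi hj (hui.trans hvj.symm)
  rfl

lemma surjOn_nonnegRot (hm : m ≤ n) :
    Set.SurjOn (fun p => nonnegRot p.1) (pointedPaths A B n m) (nonnegPaths A B n) := by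
  rintro P ⟨hval, hP, hlen⟩
  have hw : pathHeight (P ++ [Step.up]) = 1 := by
    rw [pathHeight_append, (nonneg_iff_prefix.1 hP).1]
    rfl
  have hwlen : pathLen (P ++ [Step.up]) = n + 1 := by simp [hlen, len]
  obtain ⟨k, hk, j, hj, hkj⟩ := exists_rotate_npLen_add_eq hw (m := m) (by omega)
  refine ⟨((P ++ [Step.up]).rotate (k + 1), j), ⟨?_, ?_, ?_, ?_, hkj⟩, ?_⟩
  · intro s hs
    rcases mem_append.1 (mem_rotate.1 hs) with hs | hs
    · exact hval s hs
    · rw [mem_singleton.1 hs]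
      trivial
  · exact (rotate_perm _ _).pathHeight_eq.trans hw
  · exact (rotate_perm _ _).pathLen_eq.trans hwlen
  · exact ⟨_, getLast?_rotate_succ hk, by omega, hj⟩
  · exact nonnegRot_eq hP ⟨k + 1, rfl⟩

end Bijection

lemma pathWt_nonnegRot {R : Type*} [CommRing R] (a b : ℕ → R) {w : List Step}
    (hw : pathHeight w = 1) : pathWt a b (nonnegRot w) = pathWt a b w := by
  rw [← pathWt_append_up, (nonnegRot_spec hw).2.perm.pathWt_eq]

theorem class1_chung_feller_dyck_type_general {R : Type*} [CommRing R] (A B : Finset ℕ)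
    (a b : ℕ → R)
    (n m : ℕ) (hm : m ≤ n) :
    (∑ᶠ p ∈ {p : List Step × ℕ | (∀ s ∈ p.1, Valid A B s) ∧ (p.1.map dh).sum = 1 ∧
        pathLen p.1 = n + 1 ∧
        (∃ s, p.1.getLast? = some s ∧ 1 ≤ len s ∧ p.2 < len s) ∧
        npLen p.1 + p.2 = m},
      pathWt a b p.1) =
    ∑ᶠ L ∈ {L : List Step | (∀ s ∈ L, Valid A B s) ∧ Nonneg L ∧ pathLen L = n},
      pathWt a b L :=
  finsum_mem_eq_of_bijOn (fun p => nonnegRot p.1)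
    ⟨mapsTo_nonnegRot, injOn_nonnegRot, surjOn_nonnegRot hm⟩
    fun _ hp => (pathWt_nonnegRot a b hp.2.1).symm

/-- Chung-Feller theorem of Dyck type for Class 1 (Theorem 3.4): for `0 ≤ m ≤ n`, the
total weight of pointed paths from `(0,0)` to the line `y = 1` with total length
`n+1`, last step of length `≥ 1`, mark `j` less than the length of the last step, and
non-positive pointed length `\bar l(L) + j = m`, equals the total weight of
nonnegative paths of length `n`. -/
theorem class1_chung_feller_dyck_type {R : Type*} [CommRing R] (A B : Finset ℕ)
    (hA : ∀ i ∈ A, 0 < i) (hB : ∀ i ∈ B, 0 < i) (a b : ℕ → R)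
    (n m : ℕ) (hm : m ≤ n) :
    (∑ᶠ p ∈ {p : List Step × ℕ | (∀ s ∈ p.1, Valid A B s) ∧ (p.1.map dh).sum = 1 ∧
        pathLen p.1 = n + 1 ∧
        (∃ s, p.1.getLast? = some s ∧ 1 ≤ len s ∧ p.2 < len s) ∧
        npLen p.1 + p.2 = m},
      pathWt a b p.1) =
    ∑ᶠ L ∈ {L : List Step | (∀ s ∈ L, Valid A B s) ∧ Nonneg L ∧ pathLen L = n},
      pathWt a b L :=
  class1_chung_feller_dyck_type_general A B a b n m hm
end
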